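/- arXiv:2204.05914 — 4 statements merged into one kernel-verified Lean document; each statement's English description precedes it below -/
import Mathlib

section
/- Let f be a closure operator on a finite set E and let F be a proper flat of f with f(∅) ⊊ F. Then the link of the vertex x_F in the Bergman complex Δ(f) is isomorphic to the join Δ(f|_F) ∗ Δ(f/F) of the Bergman complex of the restriction f|_F with the Bergman complex of the contraction f/F. -/
open Finset

/-! ## Simplicial complexes as downward-relevant families of finite faces -/

section Complexes

variable {V : Type*} {W : Type*}

/-- A facet of a complex (given by its set of faces) is a maximal face. -/
def IsFacet (Δ : Set (Finset V)) (s : Finset V) : Prop :=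
  s ∈ Δ ∧ ∀ t ∈ Δ, s ⊆ t → s = t

/-- The deletion of a vertex `v`: all faces not containing `v`. -/
def faceDeletion (Δ : Set (Finset V)) (v : V) : Set (Finset V) :=
  {s ∈ Δ | v ∉ s}

/-- The link of a vertex `v`: faces `τ \ {v}` for `v ∈ τ ∈ Δ`. -/
def faceLink [DecidableEq V] (Δ : Set (Finset V)) (v : V) : Set (Finset V) :=
  {s | v ∉ s ∧ insert v s ∈ Δ}

/-- Vertex decomposability: `Δ` is a simplex (the family of all subsets of one finite
set, including the case `{∅}`), or it has a vertex `v` whose deletion and link are vertex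
decomposable and such that every facet of the deletion is a facet of `Δ`. -/
inductive IsVertexDecomposable [DecidableEq V] : Set (Finset V) → Prop
  | simplex (s : Finset V) : IsVertexDecomposable {t | t ⊆ s}
  | step (Δ : Set (Finset V)) (v : V) :
      {v} ∈ Δ →
      IsVertexDecomposable (faceDeletion Δ v) →
      IsVertexDecomposable (faceLink Δ v) →
      (∀ s, IsFacet (faceDeletion Δ v) s → IsFacet Δ s) →
      IsVertexDecomposable Δ

/-- A family of faces is pure of dimension `d` if it is nonempty and all of its
maximal elements have cardinality `d + 1`. -/
def IsPureDim (Δ : Set (Finset V)) (d : ℤ) : Prop :=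
  Δ.Nonempty ∧ ∀ s, IsFacet Δ s → (s.card : ℤ) = d + 1

/-- `l` is a shelling order of `Δ`: it enumerates the facets of `Δ` without repetition,
and for every `i ≥ 1` the complex `⟨σ₀, …, σ_{i-1}⟩ ∩ ⟨σ_i⟩` is pure of dimension
`dim σ_i - 1 = |σ_i| - 2`. -/
def IsShelling (Δ : Set (Finset V)) (l : List (Finset V)) : Prop :=
  l.Nodup ∧ (∀ s, s ∈ l ↔ IsFacet Δ s) ∧
  ∀ (i : ℕ) (hi : i < l.length), 0 < i →
    IsPureDim ({t | ∃ s ∈ l.take i, t ⊆ s} ∩ {t | t ⊆ l[i]})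
      ((l[i].card : ℤ) - 2)

/-- A complex is shellable if it admits a shelling order of its facets. -/
def Shellable (Δ : Set (Finset V)) : Prop := ∃ l, IsShelling Δ l

/-- The join of two complexes, realized on the sum of the two vertex types. -/
def complexJoin [DecidableEq V] [DecidableEq W]
    (Δ : Set (Finset V)) (Γ : Set (Finset W)) : Set (Finset (V ⊕ W)) :=
  {s | ∃ a ∈ Δ, ∃ b ∈ Γ, s = a.image Sum.inl ∪ b.image Sum.inr}

/-- An isomorphism of simplicial complexes: a vertex map which is injective on every
face and induces a bijection between the two families of faces. -/
def ComplexIso [DecidableEq W] (Δ : Set (Finset V)) (Γ : Set (Finset W)) : Prop :=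
  ∃ φ : V → W,
    (∀ s ∈ Δ, Set.InjOn φ ↑s) ∧
    (∀ s ∈ Δ, s.image φ ∈ Γ) ∧
    (∀ s t, s ∈ Δ → t ∈ Δ → s.image φ = t.image φ → s = t) ∧
    (∀ t ∈ Γ, ∃ s ∈ Δ, s.image φ = t)

/-- The property of appearing as an initial segment: any entry of `l` earlier than an
entry satisfying `P` also satisfies `P`. -/
def PrefixProp {α : Type*} (l : List α) (P : α → Prop) : Prop :=
  ∀ (i j : ℕ) (hi : i < l.length) (hj : j < l.length), i < j → P l[j] → P l[i]

/-- The property of appearing as a final segment: any entry of `l` later than an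
entry satisfying `P` also satisfies `P`. -/
def SuffixProp {α : Type*} (l : List α) (P : α → Prop) : Prop :=
  ∀ (i j : ℕ) (hi : i < l.length) (hj : j < l.length), i < j → P l[i] → P l[j]

/-- `a` appears strictly before `b` in the list `l`. -/
def ListPrec {α : Type*} (l : List α) (a b : α) : Prop :=
  ∃ (i j : ℕ) (hi : i < l.length) (hj : j < l.length), i < j ∧ l[i] = a ∧ l[j] = b

/-- The h-polynomial of a (finite) complex `Δ`, via
`h(Δ,t) = ∑_{s ∈ Δ} t^{|s|} (1-t)^{(d+1)-|s|}` where `d = dim Δ`. -/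
noncomputable def hPoly {V : Type*} [Fintype V] [DecidableEq V]
    (Δ : Set (Finset V)) : Polynomial ℤ :=
  ∑ s ∈ Δ.toFinite.toFinset,
    Polynomial.X ^ s.card *
      (1 - Polynomial.X) ^ (Δ.toFinite.toFinset.sup Finset.card - s.card)

end Complexes

/-! ## Closure operators -/

/-- A closure operator on the finite set `E`. -/
structure ClosureOp (E : Type*) [Fintype E] [DecidableEq E] where
  cl : Finset E → Finset E
  subset_cl : ∀ A, A ⊆ cl A
  cl_mono : ∀ ⦃A B : Finset E⦄, A ⊆ B → cl A ⊆ cl B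
  cl_idem : ∀ A, cl (cl A) = cl A

namespace ClosureOp

variable {E : Type*} [Fintype E] [DecidableEq E]

/-- A flat of `f` is a closed set. -/
def IsFlat (f : ClosureOp E) (F : Finset E) : Prop := f.cl F = F

/-- A proper flat of `f` is a flat different from the whole ground set. -/
def IsProperFlat (f : ClosureOp E) (F : Finset E) : Prop :=
  f.cl F = F ∧ F ≠ Finset.univ

/-- `I` is independent for `f` if removing any of its elements strictly shrinks its
closure. -/
def Indep (f : ClosureOp E) (I : Finset E) : Prop :=
  ∀ i ∈ I, f.cl (I.erase i) ⊂ f.cl I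

/-- A basis is an independent set whose closure is all of `E`. -/
def IsBasis (f : ClosureOp E) (I : Finset E) : Prop :=
  f.Indep I ∧ f.cl I = Finset.univ

/-- The independence complex of `f`: faces are the independent sets. -/
def indepComplex (f : ClosureOp E) : Set (Finset E) := {I | f.Indep I}

/-- The Bergman complex of `f`: faces are chains of proper flats strictly between
`f(∅)` and `E`. A vertex `x_F` is represented by the flat `F` itself. -/
def bergman (f : ClosureOp E) : Set (Finset (Finset E)) :=
  {C | (∀ F ∈ C, f.IsProperFlat F ∧ f.cl ∅ ⊂ F) ∧
       (∀ F ∈ C, ∀ G ∈ C, F ⊆ G ∨ G ⊆ F)}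

/-- The cone over the Bergman complex of `f`: chains of proper flats, where the
bottom flat `f(∅)` is allowed as a member. -/
def coneBergman (f : ClosureOp E) : Set (Finset (Finset E)) :=
  {C | (∀ F ∈ C, f.IsProperFlat F) ∧
       (∀ F ∈ C, ∀ G ∈ C, F ⊆ G ∨ G ⊆ F)}

/-- The augmented Bergman complex of `f`, on the vertex set
`{y_i : i ∈ E} ⊔ {x_F : F a proper flat}`; here `y_i = Sum.inl i` and
`x_F = Sum.inr F`.  Faces consist of an independent set `I` together with a chain of
proper flats all containing `f(I)`. -/
def augBergman (f : ClosureOp E) : Set (Finset (E ⊕ Finset E)) :=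
  {s | ∃ (I : Finset E) (C : Finset (Finset E)),
    s = I.image Sum.inl ∪ C.image Sum.inr ∧
    f.Indep I ∧
    (∀ F ∈ C, f.IsProperFlat F) ∧
    (∀ F ∈ C, ∀ G ∈ C, F ⊆ G ∨ G ⊆ F) ∧
    (∀ F ∈ C, f.cl I ⊆ F)}

/-- An upper-set of proper flats of `f`. -/
def IsFlatUpperSet (f : ClosureOp E) (L : Set (Finset E)) : Prop :=
  (∀ F ∈ L, f.IsProperFlat F) ∧
  ∀ F ∈ L, ∀ F', f.IsProperFlat F' → F ⊆ F' → F' ∈ L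

/-- The induced subcomplex of the augmented Bergman complex on the vertex set
`{y_i : i ∈ E} ⊔ {x_F : F ∈ L}`. -/
def augBergmanOn (f : ClosureOp E) (L : Set (Finset E)) :
    Set (Finset (E ⊕ Finset E)) :=
  {s | s ∈ f.augBergman ∧ ∀ F : Finset E, Sum.inr F ∈ s → F ∈ L}

/-- The restriction `f|_F` of a closure operator to `F`, as a closure operator on the
subtype `{x // x ∈ F}`; when `F` is a flat, `(f|_F)(A) = f(A)`. -/
def restrict (f : ClosureOp E) (F : Finset E) : ClosureOp {x // x ∈ F} where
  cl A := (f.cl (A.image Subtype.val)).subtype (· ∈ F)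
  subset_cl A a ha := by
    rw [Finset.mem_subtype]
    exact f.subset_cl _ (Finset.mem_image_of_mem _ ha)
  cl_mono A B h a ha := by
    rw [Finset.mem_subtype] at *
    exact f.cl_mono (Finset.image_subset_image h) ha
  cl_idem A := by
    have key : ∀ s : Finset E,
        ((s.subtype (· ∈ F)).image Subtype.val) = s.filter (· ∈ F) := by
      intro s
      ext x
      simp [Finset.mem_subtype, Finset.mem_image, Finset.mem_filter, Subtype.exists,
        and_comm]
    ext a
    rw [Finset.mem_subtype, Finset.mem_subtype, key]
    constructor
    · intro hx
      have h1 : f.cl ((f.cl (A.image Subtype.val)).filter (· ∈ F))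
          ⊆ f.cl (A.image Subtype.val) := by
        have := f.cl_mono (Finset.filter_subset (· ∈ F) (f.cl (A.image Subtype.val)))
        rw [f.cl_idem] at this
        exact this
      exact h1 hx
    · intro hx
      refine f.cl_mono ?_ hx
      intro x hxA
      rw [Finset.mem_filter]
      obtain ⟨a', _, rfl⟩ := Finset.mem_image.mp hxA
      exact ⟨f.subset_cl _ hxA, a'.2⟩

/-- The contraction `f/F` of a closure operator by `F`, as a closure operator on the
subtype `{x // x ∉ F}`; it is given by `(f/F)(A) = f(A ∪ F) \ F`. -/
def contract (f : ClosureOp E) (F : Finset E) : ClosureOp {x // x ∉ F} where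
  cl A := (f.cl (A.image Subtype.val ∪ F)).subtype (· ∉ F)
  subset_cl A a ha := by
    rw [Finset.mem_subtype]
    exact f.subset_cl _ (Finset.mem_union_left _ (Finset.mem_image_of_mem _ ha))
  cl_mono A B h a ha := by
    rw [Finset.mem_subtype] at *
    exact f.cl_mono (Finset.union_subset_union_left (Finset.image_subset_image h)) ha
  cl_idem A := by
    have key : ∀ s : Finset E,
        ((s.subtype (· ∉ F)).image Subtype.val) = s.filter (· ∉ F) := by
      intro s
      ext x
      simp [Finset.mem_subtype, Finset.mem_image, Finset.mem_filter, Subtype.exists,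
        and_comm]
    set s := f.cl (A.image Subtype.val ∪ F) with hs
    have hFs : F ⊆ s := fun x hx => f.subset_cl _ (Finset.mem_union_right _ hx)
    have hmain : f.cl ((s.subtype (· ∉ F)).image Subtype.val ∪ F) = s := by
      rw [key]
      apply le_antisymm
      · have h1 : s.filter (· ∉ F) ∪ F ⊆ s :=
          Finset.union_subset (Finset.filter_subset _ _) hFs
        have := f.cl_mono h1
        rw [hs, f.cl_idem] at this
        exact this
      · refine f.cl_mono ?_
        intro x hx
        rcases Finset.mem_union.mp hx with hx' | hx'
        · obtain ⟨a', _, rfl⟩ := Finset.mem_image.mp hx'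
          by_cases hxF : (a' : E) ∈ F
          · exact Finset.mem_union_right _ hxF
          · exact Finset.mem_union_left _
              (Finset.mem_filter.mpr ⟨f.subset_cl _ (Finset.mem_union_left _ hx'), hxF⟩)
        · exact Finset.mem_union_right _ hx'
    ext a
    rw [Finset.mem_subtype, Finset.mem_subtype, hmain]

end ClosureOp

/-! ## Matroids and their closure operators -/

/-- The closure operator (on finsets) of a matroid whose ground set is all of the
finite type `E`. -/
noncomputable def Matroid.closureOp {E : Type*} [Fintype E] [DecidableEq E]
    (M : Matroid E) (hE : M.E = Set.univ) : ClosureOp E where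
  cl A := (M.closure ↑A).toFinite.toFinset
  subset_cl A := by
    intro a ha
    simp only [Set.Finite.mem_toFinset]
    exact M.subset_closure (↑A) (by simp [hE]) ha
  cl_mono A B h := by
    intro a ha
    simp only [Set.Finite.mem_toFinset] at *
    exact M.closure_subset_closure (Finset.coe_subset.mpr h) ha
  cl_idem A := by
    ext a
    simp only [Set.Finite.mem_toFinset, Set.Finite.coe_toFinset]
    rw [M.closure_closure]

/-! ## The flag-to-basis order on facets of the augmented Bergman complex -/

namespace ClosureOp

variable {E : Type*} [Fintype E] [DecidableEq E]

/-- The independent-set part `I` of a face of the augmented Bergman complex. -/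
noncomputable def faceIndep (s : Finset (E ⊕ Finset E)) : Finset E :=
  s.preimage Sum.inl Sum.inl_injective.injOn

/-- The flag part `F_•` of a face of the augmented Bergman complex. -/
noncomputable def faceFlag (s : Finset (E ⊕ Finset E)) : Finset (Finset E) :=
  s.preimage Sum.inr Sum.inr_injective.injOn

/-- The flag part of a facet with its minimal flat `f(I)` removed, regarded as a face
of the Bergman complex of the contraction `f / f(I)`: each flat `G` of the flag is
sent to the flat `G \ f(I)` of the contraction. -/
noncomputable def reducedFlag (f : ClosureOp E) (s : Finset (E ⊕ Finset E)) : Finset (Finset E) :=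
  ((faceFlag s).erase (f.cl (faceIndep s))).image (fun G => G \ f.cl (faceIndep s))

/-- The flag-to-basis order `≺` on facets of the augmented Bergman complex, relative
to a linear extension `r` of the independence complex and a fixed family `sh` of
shellings of the Bergman complexes of the contractions `f/F`.  Facets with nonempty
flag are compared first by `r` on their independent parts, then (for equal independent
parts) by the position of their reduced flags in the fixed shelling `sh (f.cl I)`
(whose faces are mapped down to `Finset E` level by taking images of `Subtype.val`);
facets with empty flag (bases) come after all facets with nonempty flag. -/
def augPrec (f : ClosureOp E) (r : Finset E → Finset E → Prop)
    (sh : (F : Finset E) → List (Finset (Finset {x // x ∉ F})))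
    (s t : Finset (E ⊕ Finset E)) : Prop :=
  ((faceFlag s).Nonempty ∧ (faceFlag t).Nonempty ∧
    (r (faceIndep s) (faceIndep t) ∨
      (faceIndep s = faceIndep t ∧
        ListPrec ((sh (f.cl (faceIndep s))).map
            (fun c => c.image (fun G => G.image Subtype.val)))
          (f.reducedFlag s) (f.reducedFlag t)))) ∨
  ((faceFlag s).Nonempty ∧ faceFlag t = ∅)

end ClosureOp


set_option linter.unusedSectionVars false

section Link13
variable {E : Type*} [Fintype E] [DecidableEq E]

lemma imval (p : E → Prop) [DecidablePred p] (s : Finset E) :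
    (s.subtype p).image Subtype.val = s.filter p := by
  ext x; simp [Finset.mem_subtype, Subtype.exists, and_comm]

lemma subimval (p : E → Prop) [DecidablePred p] (A : Finset {x // p x}) :
    (A.image Subtype.val).subtype p = A := by
  ext ⟨x, hx⟩
  simp only [Finset.mem_subtype, Finset.mem_image, Subtype.exists, exists_and_right,
    exists_eq_right]
  exact ⟨fun ⟨_, h⟩ => h, fun h => ⟨hx, h⟩⟩

lemma subtype_mono (p : E → Prop) [DecidablePred p] {s t : Finset E} (h : s ⊆ t) :
    s.subtype p ⊆ t.subtype p := by
  intro a ha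
  rw [Finset.mem_subtype] at *
  exact h ha

/-- The vertex map for Statement 13. -/
def phiF (F : Finset E) (G : Finset E) :
    Finset {x // x ∈ F} ⊕ Finset {x // x ∉ F} :=
  if G ⊆ F then Sum.inl (G.subtype (· ∈ F)) else Sum.inr (G.subtype (· ∉ F))

lemma phiF_inj {F G G' : Finset E} (hG : G ⊆ F ∨ F ⊆ G) (hG' : G' ⊆ F ∨ F ⊆ G')
    (h : phiF F G = phiF F G') : G = G' := by
  by_cases hc : G ⊆ F <;> by_cases hc' : G' ⊆ F <;>
    simp only [phiF, hc, hc', if_true, if_false] at h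
  · have h2 := congrArg (Finset.image Subtype.val) (Sum.inl.inj h)
    rw [imval, imval, Finset.filter_true_of_mem (fun x hx => hc hx),
      Finset.filter_true_of_mem (fun x hx => hc' hx)] at h2
    exact h2
  · exact (Sum.inl_ne_inr h).elim
  · exact (Sum.inr_ne_inl h).elim
  · have hFG : F ⊆ G := hG.resolve_left hc
    have hFG' : F ⊆ G' := hG'.resolve_left hc'
    have h2 := congrArg (Finset.image Subtype.val) (Sum.inr.inj h)
    rw [imval, imval] at h2
    ext x
    by_cases hxF : x ∈ F
    · simp [hFG hxF, hFG' hxF]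
    · have := Finset.ext_iff.mp h2 x
      simp only [Finset.mem_filter, hxF, not_false_iff, and_true] at this
      exact this

variable (f : ClosureOp E) (F : Finset E)

lemma cl_empty_subset (hF : f.IsProperFlat F) : f.cl ∅ ⊆ F := by
  have := f.cl_mono (Finset.empty_subset F)
  rwa [hF.1] at this

/-- forward direction: flats strictly below F give flats of the restriction -/
lemma restrict_mem (hF : f.IsProperFlat F) {G : Finset E} (hGf : f.cl G = G)
    (hGF : G ⊂ F) (hG0 : f.cl ∅ ⊂ G) :
    (f.restrict F).IsProperFlat (G.subtype (· ∈ F)) ∧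
      (f.restrict F).cl ∅ ⊂ G.subtype (· ∈ F) := by
  have him : (G.subtype (· ∈ F)).image Subtype.val = G := by
    rw [imval, Finset.filter_true_of_mem (fun x hx => hGF.subset hx)]
  have hcl : (f.restrict F).cl (G.subtype (· ∈ F)) = G.subtype (· ∈ F) := by
    show (f.cl ((G.subtype (· ∈ F)).image Subtype.val)).subtype _ = _
    rw [him, hGf]
  have hclE : (f.restrict F).cl ∅ = (f.cl ∅).subtype (· ∈ F) := by
    show (f.cl ((∅ : Finset {x // x ∈ F}).image Subtype.val)).subtype _ = _
    rw [Finset.image_empty]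
  refine ⟨⟨hcl, ?_⟩, ?_⟩
  · obtain ⟨x, hxF, hxG⟩ := Finset.exists_of_ssubset hGF
    intro heq
    have : (⟨x, hxF⟩ : {x // x ∈ F}) ∈ G.subtype (· ∈ F) := heq ▸ Finset.mem_univ _
    rw [Finset.mem_subtype] at this
    exact hxG this
  · rw [hclE, Finset.ssubset_def]
    constructor
    · exact subtype_mono _ hG0.subset
    · intro hcon
      obtain ⟨x, hxG, hx0⟩ := Finset.exists_of_ssubset hG0
      have hxF : x ∈ F := hGF.subset hxG
      have : (⟨x, hxF⟩ : {x // x ∈ F}) ∈ (f.cl ∅).subtype (· ∈ F) :=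
        hcon (Finset.mem_subtype.mpr hxG)
      rw [Finset.mem_subtype] at this
      exact hx0 this

/-- forward direction: flats strictly above F give flats of the contraction -/
lemma contract_mem (hF : f.IsProperFlat F) {G : Finset E} (hGf : f.cl G = G)
    (hGu : G ≠ Finset.univ) (hFG : F ⊂ G) :
    (f.contract F).IsProperFlat (G.subtype (· ∉ F)) ∧
      (f.contract F).cl ∅ ⊂ G.subtype (· ∉ F) := by
  have him : (G.subtype (· ∉ F)).image Subtype.val ∪ F = G := by
    rw [imval]
    ext x
    simp only [Finset.mem_union, Finset.mem_filter]
    constructor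
    · rintro (⟨hx, _⟩ | hx)
      · exact hx
      · exact hFG.subset hx
    · intro hx
      by_cases hxF : x ∈ F
      · exact Or.inr hxF
      · exact Or.inl ⟨hx, hxF⟩
  have hcl : (f.contract F).cl (G.subtype (· ∉ F)) = G.subtype (· ∉ F) := by
    show (f.cl ((G.subtype (· ∉ F)).image Subtype.val ∪ F)).subtype _ = _
    rw [him, hGf]
  have hclE : (f.contract F).cl ∅ = ∅ := by
    show (f.cl ((∅ : Finset {x // x ∉ F}).image Subtype.val ∪ F)).subtype _ = _
    rw [Finset.image_empty, Finset.empty_union, hF.1]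
    ext ⟨x, hx⟩
    simp only [Finset.mem_subtype, Finset.notMem_empty, iff_false]
    exact hx
  refine ⟨⟨hcl, ?_⟩, ?_⟩
  · obtain ⟨x, hxG⟩ : ∃ x, x ∉ G := by
      by_contra hcon
      push_neg at hcon
      exact hGu (Finset.eq_univ_iff_forall.mpr hcon)
    have hxF : x ∉ F := fun hx => hxG (hFG.subset hx)
    intro heq
    have : (⟨x, hxF⟩ : {x // x ∉ F}) ∈ G.subtype (· ∉ F) := heq ▸ Finset.mem_univ _
    rw [Finset.mem_subtype] at this
    exact hxG this
  · rw [hclE, Finset.empty_ssubset]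
    obtain ⟨x, hxG, hxF⟩ := Finset.exists_of_ssubset hFG
    exact ⟨⟨x, hxF⟩, Finset.mem_subtype.mpr hxG⟩

/-- backward: proper flats of the restriction come from flats strictly below F -/
lemma restrict_back (hF : f.IsProperFlat F) {A : Finset {x // x ∈ F}}
    (hA : (f.restrict F).IsProperFlat A) (hA0 : (f.restrict F).cl ∅ ⊂ A) :
    f.cl (A.image Subtype.val) = A.image Subtype.val ∧
      A.image Subtype.val ⊂ F ∧ f.cl ∅ ⊂ A.image Subtype.val ∧
      (A.image Subtype.val).subtype (· ∈ F) = A := by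
  set G := A.image Subtype.val with hG
  have hGF : G ⊆ F := by
    intro x hx
    obtain ⟨⟨x, hxF⟩, _, rfl⟩ := Finset.mem_image.mp hx
    exact hxF
  have hclsub : f.cl G ⊆ F := by
    have := f.cl_mono hGF
    rwa [hF.1] at this
  have hflat : f.cl G = G := by
    have h1 : (f.cl G).subtype (· ∈ F) = A := hA.1
    have h2 := congrArg (Finset.image Subtype.val) h1
    rw [imval, Finset.filter_true_of_mem (fun x hx => hclsub hx)] at h2
    rw [h2]
  have hsub : (A.image Subtype.val).subtype (· ∈ F) = A := subimval _ A
  have hssub : G ⊂ F := by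
    refine Finset.ssubset_iff_subset_ne.mpr ⟨hGF, ?_⟩
    obtain ⟨a, ha⟩ : ∃ a : {x // x ∈ F}, a ∉ A := by
      by_contra hcon
      push_neg at hcon
      exact hA.2 (Finset.eq_univ_iff_forall.mpr hcon)
    intro heq
    have : (a : E) ∈ G := by rw [heq]; exact a.2
    obtain ⟨a', ha', haa⟩ := Finset.mem_image.mp this
    exact ha (Subtype.ext haa ▸ ha')
  have hclE : (f.restrict F).cl ∅ = (f.cl ∅).subtype (· ∈ F) := by
    show (f.cl ((∅ : Finset {x // x ∈ F}).image Subtype.val)).subtype _ = _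
    rw [Finset.image_empty]
  have h0G : f.cl ∅ ⊂ G := by
    rw [hclE] at hA0
    rw [Finset.ssubset_def]
    constructor
    · intro x hx
      have hxF : x ∈ F := cl_empty_subset f F hF hx
      have : (⟨x, hxF⟩ : {x // x ∈ F}) ∈ A := hA0.subset (Finset.mem_subtype.mpr hx)
      exact Finset.mem_image.mpr ⟨⟨x, hxF⟩, this, rfl⟩
    · intro hcon
      obtain ⟨a, haA, ha0⟩ := Finset.exists_of_ssubset hA0
      have : (a : E) ∈ f.cl ∅ := by
        have := hcon (Finset.mem_image_of_mem Subtype.val haA)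
        exact this
      exact ha0 (Finset.mem_subtype.mpr this)
  exact ⟨hflat, hssub, h0G, hsub⟩

/-- backward: proper flats of the contraction come from flats strictly above F -/
lemma contract_back (hF : f.IsProperFlat F) {B : Finset {x // x ∉ F}}
    (hB : (f.contract F).IsProperFlat B) (hB0 : (f.contract F).cl ∅ ⊂ B) :
    f.cl (B.image Subtype.val ∪ F) = B.image Subtype.val ∪ F ∧
      B.image Subtype.val ∪ F ≠ Finset.univ ∧ F ⊂ B.image Subtype.val ∪ F ∧
      (B.image Subtype.val ∪ F).subtype (· ∉ F) = B := by
  set G := B.image Subtype.val ∪ F with hG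
  have hFG : F ⊆ G := Finset.subset_union_right
  have hclB : (f.cl G).subtype (· ∉ F) = B := hB.1
  have hflat : f.cl G = G := by
    ext x
    constructor
    · intro hx
      by_cases hxF : x ∈ F
      · exact hFG hxF
      · have : (⟨x, hxF⟩ : {x // x ∉ F}) ∈ B := hclB ▸ Finset.mem_subtype.mpr hx
        exact Finset.mem_union_left _ (Finset.mem_image_of_mem Subtype.val this)
    · intro hx
      exact f.subset_cl G hx
  have hsub : G.subtype (· ∉ F) = B := by
    ext ⟨x, hx⟩
    rw [Finset.mem_subtype, hG]
    simp only [Finset.mem_union, hx, or_false]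
    constructor
    · intro h
      obtain ⟨b, hb, rfl⟩ := Finset.mem_image.mp h
      rw [Subtype.coe_eta]
      exact hb
    · intro h
      exact Finset.mem_image_of_mem Subtype.val h
  have hclE : (f.contract F).cl ∅ = ∅ := by
    show (f.cl ((∅ : Finset {x // x ∉ F}).image Subtype.val ∪ F)).subtype _ = _
    rw [Finset.image_empty, Finset.empty_union, hF.1]
    ext ⟨x, hx⟩
    simp only [Finset.mem_subtype, Finset.notMem_empty, iff_false]
    exact hx
  have hBne : B.Nonempty := by
    rw [hclE, Finset.empty_ssubset] at hB0
    exact hB0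
  have hFGs : F ⊂ G := by
    refine Finset.ssubset_iff_subset_ne.mpr ⟨hFG, ?_⟩
    obtain ⟨⟨x, hx⟩, hxB⟩ := hBne
    intro heq
    have : x ∈ G := Finset.mem_union_left _ (Finset.mem_image_of_mem Subtype.val hxB)
    rw [← heq] at this
    exact hx this
  have hGu : G ≠ Finset.univ := by
    obtain ⟨b, hb⟩ : ∃ b : {x // x ∉ F}, b ∉ B := by
      by_contra hcon
      push_neg at hcon
      exact hB.2 (Finset.eq_univ_iff_forall.mpr hcon)
    intro heq
    have hbG : (b : E) ∈ G := heq ▸ Finset.mem_univ _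
    rw [hG, Finset.mem_union] at hbG
    rcases hbG with h | h
    · obtain ⟨b', hb', hbb⟩ := Finset.mem_image.mp h
      exact hb (Subtype.ext hbb ▸ hb')
    · exact b.2 h
  exact ⟨hflat, hGu, hFGs, hsub⟩

end Link13


/-- For a closure operator `f` and a proper flat `F` with
`f(∅) ⊊ F` (so that `x_F` is a vertex of the Bergman complex), the link of `x_F` in
the Bergman complex `Δ(f)` is isomorphic to the join `Δ(f|_F) ∗ Δ(f/F)`. -/
theorem link_bergman_iso_join
    {E : Type*} [Fintype E] [DecidableEq E] (f : ClosureOp E) (F : Finset E)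
    (hF : f.IsProperFlat F) (h0 : f.cl ∅ ⊂ F) :
    ComplexIso (faceLink f.bergman F)
      (complexJoin (f.restrict F).bergman ((f.contract F).bergman)) := by
  classical
  have linkFacts : ∀ s : Finset (Finset E), s ∈ faceLink f.bergman F → ∀ G ∈ s,
      (f.cl G = G ∧ G ≠ Finset.univ) ∧ f.cl ∅ ⊂ G ∧ (G ⊂ F ∨ F ⊂ G) := by
    rintro s ⟨hFs, hins⟩ G hG
    have h1 := hins.1 G (Finset.mem_insert_of_mem hG)
    have hc := hins.2 G (Finset.mem_insert_of_mem hG) F (Finset.mem_insert_self F s)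
    have hGF : G ≠ F := fun h => hFs (h ▸ hG)
    refine ⟨⟨h1.1.1, h1.1.2⟩, h1.2, ?_⟩
    rcases hc with h | h
    · exact Or.inl (Finset.ssubset_iff_subset_ne.mpr ⟨h, hGF⟩)
    · exact Or.inr (Finset.ssubset_iff_subset_ne.mpr ⟨h, fun e => hGF e.symm⟩)
  have linkChain : ∀ s : Finset (Finset E), s ∈ faceLink f.bergman F →
      ∀ G ∈ s, ∀ G' ∈ s, G ⊆ G' ∨ G' ⊆ G := by
    rintro s ⟨hFs, hins⟩ G hG G' hG'
    exact hins.2 G (Finset.mem_insert_of_mem hG) G' (Finset.mem_insert_of_mem hG')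
  refine ⟨phiF F, ?_, ?_, ?_, ?_⟩
  · -- injectivity on each face
    intro s hs G hG G' hG' h
    have c1 := (linkFacts s hs G (Finset.mem_coe.mp hG)).2.2
    have c2 := (linkFacts s hs G' (Finset.mem_coe.mp hG')).2.2
    exact phiF_inj (c1.imp (fun h => h.subset) (fun h => h.subset))
      (c2.imp (fun h => h.subset) (fun h => h.subset)) h
  · -- faces map into the join
    intro s hs
    refine ⟨(s.filter (· ⊆ F)).image (fun G => G.subtype (· ∈ F)), ⟨?_, ?_⟩,
            (s.filter (fun G => ¬ G ⊆ F)).image (fun G => G.subtype (· ∉ F)), ⟨?_, ?_⟩, ?_⟩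
    · rintro A hA
      obtain ⟨G, hGs, rfl⟩ := Finset.mem_image.mp hA
      rw [Finset.mem_filter] at hGs
      have facts := linkFacts s hs G hGs.1
      have hGF : G ⊂ F := by
        rcases facts.2.2 with h | h
        · exact h
        · exact absurd (Finset.Subset.antisymm h.subset hGs.2) h.ne
      exact restrict_mem f F hF facts.1.1 hGF facts.2.1
    · rintro A hA B hB
      obtain ⟨G, hGs, rfl⟩ := Finset.mem_image.mp hA
      obtain ⟨G', hG's, rfl⟩ := Finset.mem_image.mp hB
      rw [Finset.mem_filter] at hGs hG's
      rcases linkChain s hs G hGs.1 G' hG's.1 with h | h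
      · exact Or.inl (subtype_mono _ h)
      · exact Or.inr (subtype_mono _ h)
    · rintro B hB
      obtain ⟨G, hGs, rfl⟩ := Finset.mem_image.mp hB
      rw [Finset.mem_filter] at hGs
      have facts := linkFacts s hs G hGs.1
      have hFG : F ⊂ G := by
        rcases facts.2.2 with h | h
        · exact absurd h.subset hGs.2
        · exact h
      exact contract_mem f F hF facts.1.1 facts.1.2 hFG
    · rintro A hA B hB
      obtain ⟨G, hGs, rfl⟩ := Finset.mem_image.mp hA
      obtain ⟨G', hG's, rfl⟩ := Finset.mem_image.mp hB
      rw [Finset.mem_filter] at hGs hG's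
      rcases linkChain s hs G hGs.1 G' hG's.1 with h | h
      · exact Or.inl (subtype_mono _ h)
      · exact Or.inr (subtype_mono _ h)
    · rw [Finset.image_image, Finset.image_image]
      conv_lhs => rw [← Finset.filter_union_filter_not_eq (· ⊆ F) s]
      rw [Finset.image_union]
      congr 1
      · refine Finset.image_congr ?_
        intro G hG
        rw [Finset.mem_coe, Finset.mem_filter] at hG
        simp only [Function.comp_apply, phiF, if_pos hG.2]
      · refine Finset.image_congr ?_
        intro G hG
        rw [Finset.mem_coe, Finset.mem_filter] at hG
        simp only [Function.comp_apply, phiF, if_neg hG.2]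
  · -- injectivity between faces
    have main : ∀ s t : Finset (Finset E), s ∈ faceLink f.bergman F →
        t ∈ faceLink f.bergman F → s.image (phiF F) = t.image (phiF F) → s ⊆ t := by
      intro s t hs ht h G hG
      have : phiF F G ∈ t.image (phiF F) := h ▸ Finset.mem_image_of_mem _ hG
      obtain ⟨G', hG', hGG'⟩ := Finset.mem_image.mp this
      have c1 := (linkFacts t ht G' hG').2.2
      have c2 := (linkFacts s hs G hG).2.2
      have := phiF_inj (c1.imp (fun h => h.subset) (fun h => h.subset))
        (c2.imp (fun h => h.subset) (fun h => h.subset)) hGG'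
      rwa [← this]
    intro s t hs ht h
    exact Finset.Subset.antisymm (main s t hs ht h) (main t s ht hs h.symm)
  · -- surjectivity onto the join
    rintro t ⟨a, ha, b, hb, rfl⟩
    have hafacts : ∀ A ∈ a, f.cl (A.image Subtype.val) = A.image Subtype.val ∧
        A.image Subtype.val ⊂ F ∧ f.cl ∅ ⊂ A.image Subtype.val ∧
        (A.image Subtype.val).subtype (· ∈ F) = A :=
      fun A hA => restrict_back f F hF (ha.1 A hA).1 (ha.1 A hA).2
    have hbfacts : ∀ B ∈ b, f.cl (B.image Subtype.val ∪ F) = B.image Subtype.val ∪ F ∧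
        B.image Subtype.val ∪ F ≠ Finset.univ ∧ F ⊂ B.image Subtype.val ∪ F ∧
        (B.image Subtype.val ∪ F).subtype (· ∉ F) = B :=
      fun B hB => contract_back f F hF (hb.1 B hB).1 (hb.1 B hB).2
    refine ⟨a.image (fun A => A.image Subtype.val) ∪
            b.image (fun B => B.image Subtype.val ∪ F), ⟨?_, ?_, ?_⟩, ?_⟩
    · -- F is not a vertex of the face
      intro hmem
      rcases Finset.mem_union.mp hmem with h | h
      · obtain ⟨A, hA, hAF⟩ := Finset.mem_image.mp h
        exact (hafacts A hA).2.1.ne hAF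
      · obtain ⟨B, hB, hBF⟩ := Finset.mem_image.mp h
        exact (hbfacts B hB).2.2.1.ne hBF.symm
    · -- all members of insert F s are proper flats above cl ∅
      intro G hG
      rcases Finset.mem_insert.mp hG with rfl | hG
      · exact ⟨hF, h0⟩
      rcases Finset.mem_union.mp hG with h | h
      · obtain ⟨A, hA, rfl⟩ := Finset.mem_image.mp h
        have facts := hafacts A hA
        refine ⟨⟨facts.1, ?_⟩, facts.2.2.1⟩
        intro hu
        exact hF.2 (Finset.univ_subset_iff.mp (hu ▸ facts.2.1.subset))
      · obtain ⟨B, hB, rfl⟩ := Finset.mem_image.mp h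
        have facts := hbfacts B hB
        exact ⟨⟨facts.1, facts.2.1⟩, h0.trans facts.2.2.1⟩
    · -- chain condition
      intro G hG G' hG'
      have key : ∀ H, H ∈ a.image (fun A => A.image Subtype.val) ∪
          b.image (fun B => B.image Subtype.val ∪ F) ∨ H = F →
          H ⊆ F ∨ F ⊆ H := by
        intro H hH
        rcases hH with hH | rfl
        · rcases Finset.mem_union.mp hH with h | h
          · obtain ⟨A, hA, rfl⟩ := Finset.mem_image.mp h
            exact Or.inl (hafacts A hA).2.1.subset
          · obtain ⟨B, hB, rfl⟩ := Finset.mem_image.mp h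
            exact Or.inr (hbfacts B hB).2.2.1.subset
        · exact Or.inl Finset.Subset.rfl
      rcases Finset.mem_insert.mp hG with rfl | hG
      · rcases Finset.mem_insert.mp hG' with rfl | hG'
        · exact Or.inl Finset.Subset.rfl
        · exact (key G' (Or.inl hG')).symm.imp id id
      rcases Finset.mem_insert.mp hG' with rfl | hG'
      · exact key G (Or.inl hG)
      rcases Finset.mem_union.mp hG with h | h <;>
        rcases Finset.mem_union.mp hG' with h' | h'
      · obtain ⟨A, hA, rfl⟩ := Finset.mem_image.mp h
        obtain ⟨A', hA', rfl⟩ := Finset.mem_image.mp h'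
        rcases ha.2 A hA A' hA' with hc | hc
        · exact Or.inl (Finset.image_subset_image hc)
        · exact Or.inr (Finset.image_subset_image hc)
      · obtain ⟨A, hA, rfl⟩ := Finset.mem_image.mp h
        obtain ⟨B', hB', rfl⟩ := Finset.mem_image.mp h'
        exact Or.inl ((hafacts A hA).2.1.subset.trans (hbfacts B' hB').2.2.1.subset)
      · obtain ⟨B, hB, rfl⟩ := Finset.mem_image.mp h
        obtain ⟨A', hA', rfl⟩ := Finset.mem_image.mp h'
        exact Or.inr ((hafacts A' hA').2.1.subset.trans (hbfacts B hB).2.2.1.subset)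
      · obtain ⟨B, hB, rfl⟩ := Finset.mem_image.mp h
        obtain ⟨B', hB', rfl⟩ := Finset.mem_image.mp h'
        rcases hb.2 B hB B' hB' with hc | hc
        · exact Or.inl (Finset.union_subset_union_left (Finset.image_subset_image hc))
        · exact Or.inr (Finset.union_subset_union_left (Finset.image_subset_image hc))
    · -- the image is the prescribed face of the join
      rw [Finset.image_union, Finset.image_image, Finset.image_image]
      congr 1
      · refine Finset.image_congr ?_
        intro A hA
        rw [Finset.mem_coe] at hA
        have hsub : A.image Subtype.val ⊆ F := (hafacts A hA).2.1.subset
        simp only [Function.comp_apply, phiF, if_pos hsub, subimval]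
      · refine Finset.image_congr ?_
        intro B hB
        rw [Finset.mem_coe] at hB
        have facts := hbfacts B hB
        have hnsub : ¬ (B.image Subtype.val ∪ F) ⊆ F := by
          intro hcon
          exact facts.2.2.1.ne (Finset.Subset.antisymm facts.2.2.1.subset hcon)
        simp only [Function.comp_apply, phiF, if_neg hnsub, facts.2.2.2]
end

section
/- Let f be a closure operator on a finite set E and let (I, F_•) be a facet of the augmented Bergman complex Δ̂(f), where F_• is the chain F_1 ⊊ ⋯ ⊊ F_ℓ. Then either F_• is nonempty and f(I) = F_1, or F_• is empty and f(I) = E (i.e., I is a basis). -/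
open Finset

/-- If `(I, F_•)` is a facet of the augmented Bergman complex
`Δ̂(f)`, then either the flag `F_•` (here: the chain `C`) is nonempty and its minimal
flat is `f(I)`, or the flag is empty and `f(I) = E`, i.e. `I` is a basis. -/
theorem facet_min_flat_or_basis
    {E : Type*} [Fintype E] [DecidableEq E] (f : ClosureOp E)
    (I : Finset E) (C : Finset (Finset E))
    (hI : f.Indep I)
    (hC : ∀ F ∈ C, f.IsProperFlat F)
    (hchain : ∀ F ∈ C, ∀ G ∈ C, F ⊆ G ∨ G ⊆ F)
    (hcl : ∀ F ∈ C, f.cl I ⊆ F)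
    (hfacet : IsFacet f.augBergman (I.image Sum.inl ∪ C.image Sum.inr)) :
    (C.Nonempty ∧ f.cl I ∈ C) ∨ (C = ∅ ∧ f.cl I = Finset.univ) := by
  by_cases h : f.cl I = Finset.univ
  · right
    refine ⟨?_, h⟩
    rw [Finset.eq_empty_iff_forall_notMem]
    intro F hF
    exact (hC F hF).2 ((Finset.eq_univ_iff_forall.mpr fun x => hcl F hF (h ▸ Finset.mem_univ x)))
  · left
    have hmem : (I.image Sum.inl ∪ (insert (f.cl I) C).image Sum.inr : Finset (E ⊕ Finset E))
        ∈ f.augBergman := by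
      refine ⟨I, insert (f.cl I) C, rfl, hI, ?_, ?_, ?_⟩
      · intro F hF
        rcases Finset.mem_insert.mp hF with rfl | hF
        · exact ⟨f.cl_idem I, h⟩
        · exact hC F hF
      · intro F hF G hG
        rcases Finset.mem_insert.mp hF with rfl | hF <;>
          rcases Finset.mem_insert.mp hG with rfl | hG
        · exact Or.inl subset_rfl
        · exact Or.inl (hcl G hG)
        · exact Or.inr (hcl F hF)
        · exact hchain F hF G hG
      · intro F hF
        rcases Finset.mem_insert.mp hF with rfl | hF
        · exact subset_rfl
        · exact hcl F hF
    have hsub : (I.image Sum.inl ∪ C.image Sum.inr : Finset (E ⊕ Finset E)) ⊆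
        I.image Sum.inl ∪ (insert (f.cl I) C).image Sum.inr :=
      Finset.union_subset_union_right
        (Finset.image_subset_image (Finset.subset_insert _ _))
    have heq := hfacet.2 _ hmem hsub
    have : (Sum.inr (f.cl I) : E ⊕ Finset E) ∈
        I.image Sum.inl ∪ C.image Sum.inr := by
      rw [heq]
      exact Finset.mem_union_right _
        (Finset.mem_image_of_mem _ (Finset.mem_insert_self _ _))
    rcases Finset.mem_union.mp this with hx | hx
    · obtain ⟨a, _, ha⟩ := Finset.mem_image.mp hx
      exact absurd ha (by simp)
    · obtain ⟨G, hG, hGe⟩ := Finset.mem_image.mp hx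
      have hGI : G = f.cl I := Sum.inr_injective hGe
      rw [hGI] at hG
      exact ⟨⟨_, hG⟩, hG⟩
end

section
/- Let M be a matroid on a finite ground set E with closure operator cl. Then the h-polynomial of the augmented Bergman complex satisfies h(Δ̂(M), t) = Σ_{I ∈ I(M)} t^{|I|} · h(Δ(M/cl(I)), t), where the sum is over all independent sets I of M, Δ(M/cl(I)) is the Bergman complex of the contraction of M by the flat cl(I), and h(Δ(M/cl(I)), t) = 1 whenever I is a basis of M. -/
open Finset

set_option linter.unusedSectionVars false

namespace AugAux



variable {E : Type*} [Fintype E] [DecidableEq E]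

/-- rank of a finset in a matroid on a finite type -/
noncomputable def mrk (M : Matroid E) (X : Finset E) : ℕ :=
  (M.exists_isBasis' ↑X).choose.ncard

lemma mrk_eq_of_basis' {M : Matroid E} {J : Set E} {X : Finset E}
    (h : M.IsBasis' J ↑X) : J.ncard = mrk M X := by
  have h2 := (M.exists_isBasis' (↑X : Set E)).choose_spec
  rw [mrk, Set.ncard_def, Set.ncard_def, h.encard_eq_encard h2]

lemma mrk_mono (M : Matroid E) {X Y : Finset E} (h : X ⊆ Y) : mrk M X ≤ mrk M Y := by
  obtain ⟨J, hJ⟩ := M.exists_isBasis' (↑X : Set E)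
  obtain ⟨J', hJ', hsub⟩ := hJ.indep.subset_isBasis'_of_subset
    (hJ.subset.trans (Finset.coe_subset.mpr h))
  rw [← mrk_eq_of_basis' hJ, ← mrk_eq_of_basis' hJ']
  exact Set.ncard_le_ncard hsub (Set.toFinite _)

lemma mrk_lt_of_flat_ssubset (M : Matroid E) {X Y : Finset E}
    (hX : M.closure ↑X = ↑X) (hY : M.closure ↑Y = ↑Y) (h : X ⊂ Y) :
    mrk M X < mrk M Y := by
  obtain ⟨J, hJ⟩ := M.exists_isBasis' (↑X : Set E)
  obtain ⟨J', hJ', hsub⟩ := hJ.indep.subset_isBasis'_of_subset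
    (hJ.subset.trans (Finset.coe_subset.mpr h.subset))
  rw [← mrk_eq_of_basis' hJ, ← mrk_eq_of_basis' hJ']
  refine Set.ncard_lt_ncard ?_ (Set.toFinite _)
  refine hsub.ssubset_of_ne fun heq => h.ne ?_
  have : M.closure (↑X : Set E) = M.closure ↑Y := by
    rw [← hJ.closure_eq_closure, ← hJ'.closure_eq_closure, heq]
  rw [hX, hY] at this
  exact_mod_cast this

lemma mrk_cl_indep (M : Matroid E) {I : Finset E} (hI : M.Indep ↑I) :
    mrk M (M.closure ↑I).toFinite.toFinset = I.card := by
  have hb : M.IsBasis' (↑I) ((M.closure ↑I).toFinite.toFinset : Set E) := by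
    rw [Set.Finite.coe_toFinset]
    exact hI.isBasis_closure.isBasis'
  rw [← mrk_eq_of_basis' hb, Set.ncard_coe_finset]

lemma exists_flat_cover (M : Matroid E) (hE : M.E = Set.univ) {F : Finset E}
    (hF : M.closure ↑F = ↑F) (hne : F ≠ Finset.univ) :
    ∃ G : Finset E, M.closure ↑G = ↑G ∧ F ⊂ G ∧ mrk M G = mrk M F + 1 := by
  obtain ⟨x, hx⟩ : ∃ x, x ∉ F := by
    by_contra h; push_neg at h; exact hne (Finset.eq_univ_iff_forall.mpr h)
  refine ⟨(M.closure (insert x ↑F)).toFinite.toFinset, ?_, ?_, ?_⟩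
  · rw [Set.Finite.coe_toFinset, M.closure_closure]
  · constructor
    · intro a ha
      rw [Set.Finite.mem_toFinset]
      exact M.subset_closure _ (by simp [hE]) (Set.mem_insert_of_mem _ ha)
    · intro hcon
      have : x ∈ F := by
        have := hcon (by
          rw [Set.Finite.mem_toFinset]
          exact M.subset_closure _ (by simp [hE]) (Set.mem_insert _ _))
        exact this
      exact hx this
  · obtain ⟨J, hJ⟩ := M.exists_isBasis' (↑F : Set E)
    have hclJ : M.closure J = ↑F := by rw [hJ.closure_eq_closure, hF]
    have hxJ : x ∉ J := fun h => hx (hJ.subset h)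
    have hxcl : x ∉ M.closure J := by rw [hclJ]; exact_mod_cast hx
    have hind : M.Indep (insert x J) := by
      rw [hJ.indep.insert_indep_iff_of_notMem hxJ]
      exact ⟨by simp [hE], hxcl⟩
    have hclins : M.closure (insert x J) = M.closure (insert x ↑F) := by
      conv_lhs => rw [← M.closure_insert_closure_eq_closure_insert, hclJ]
    have hb : M.IsBasis' (insert x J)
        ((M.closure (insert x ↑F)).toFinite.toFinset : Set E) := by
      rw [Set.Finite.coe_toFinset, ← hclins]
      exact hind.isBasis_closure.isBasis'
    rw [← mrk_eq_of_basis' hb, ← mrk_eq_of_basis' hJ,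
      Set.ncard_insert_of_notMem hxJ (Set.toFinite _)]

set_option linter.unusedSectionVars false in
lemma flat_univ (M : Matroid E) (hE : M.E = Set.univ) :
    M.closure (↑(Finset.univ : Finset E)) = ↑(Finset.univ : Finset E) := by
  rw [Finset.coe_univ, M.closure_univ, hE]

/-- strictly increasing chains of flats strictly between `F` and `univ` exist of the
maximal length. -/
lemma exists_strict_chain (M : Matroid E) (hE : M.E = Set.univ) :
    ∀ (n : ℕ) (F : Finset E), M.closure ↑F = ↑F → F ≠ Finset.univ →
    mrk M Finset.univ = mrk M F + n →
    ∃ C : Finset (Finset E), C.card = n - 1 ∧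
      (∀ G ∈ C, M.closure ↑G = ↑G ∧ F ⊂ G ∧ G ≠ Finset.univ) ∧
      (∀ G ∈ C, ∀ G' ∈ C, G ⊆ G' ∨ G' ⊆ G) := by
  intro n
  induction n with
  | zero =>
    intro F hF hne hr
    exfalso
    have := mrk_lt_of_flat_ssubset M hF (flat_univ M hE)
      (Finset.ssubset_univ_iff.mpr hne)
    omega
  | succ n ih =>
    intro F hF hne hr
    rcases Nat.eq_zero_or_pos n with hn0 | hnpos
    · exact ⟨∅, by simp [hn0], by simp, by simp⟩
    obtain ⟨G, hG, hFG, hrk⟩ := exists_flat_cover M hE hF hne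
    have hGne : G ≠ Finset.univ := by
      intro h
      rw [h] at hrk
      omega
    obtain ⟨C, hcard, hmem, hcomp⟩ := ih G hG hGne (by omega)
    have hGC : G ∉ C := fun h => (hmem G h).2.1.ne rfl
    refine ⟨insert G C, ?_, ?_, ?_⟩
    · rw [Finset.card_insert_of_notMem hGC, hcard]; omega
    · intro G' hG'
      rcases Finset.mem_insert.mp hG' with rfl | h
      · exact ⟨hG, hFG, hGne⟩
      · exact ⟨(hmem G' h).1, hFG.trans (hmem G' h).2.1, (hmem G' h).2.2⟩
    · intro a ha b hb
      rcases Finset.mem_insert.mp ha with rfl | ha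
      · rcases Finset.mem_insert.mp hb with rfl | hb
        · exact Or.inl subset_rfl
        · exact Or.inl (hmem b hb).2.1.subset
      · rcases Finset.mem_insert.mp hb with hb | hb
        · exact Or.inr (hb ▸ (hmem a ha).2.1.subset)
        · exact hcomp a ha b hb

/-- cardinality bound for chains of flats with ranks in `[a, b]`. -/
lemma chain_card_le (M : Matroid E) {C : Finset (Finset E)} {a b : ℕ}
    (hfl : ∀ G ∈ C, M.closure ↑G = ↑G)
    (hlb : ∀ G ∈ C, a ≤ mrk M G) (hub : ∀ G ∈ C, mrk M G ≤ b)
    (hcomp : ∀ G ∈ C, ∀ G' ∈ C, G ⊆ G' ∨ G' ⊆ G) :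
    C.card ≤ b + 1 - a := by
  have hinj : Set.InjOn (mrk M) ↑C := by
    intro G hG G' hG' heq
    rcases hcomp G hG G' hG' with h | h
    · by_contra hne
      have := mrk_lt_of_flat_ssubset M (hfl G hG) (hfl G' hG') (h.ssubset_of_ne hne)
      omega
    · by_contra hne
      have := mrk_lt_of_flat_ssubset M (hfl G' hG') (hfl G hG)
        (h.ssubset_of_ne (Ne.symm hne))
      omega
  calc C.card = (C.image (mrk M)).card := (Finset.card_image_of_injOn hinj).symm
    _ ≤ (Finset.Icc a b).card := Finset.card_le_card (by
        intro x hx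
        obtain ⟨G, hG, rfl⟩ := Finset.mem_image.mp hx
        exact Finset.mem_Icc.mpr ⟨hlb G hG, hub G hG⟩)
    _ = b + 1 - a := Nat.card_Icc a b



/-! ### Bridge between `ClosureOp` and `Matroid` -/

variable (M : Matroid E) (hE : M.E = Set.univ)

lemma cl_def (A : Finset E) :
    (M.closureOp hE).cl A = (M.closure ↑A).toFinite.toFinset := rfl

lemma cl_coe (A : Finset E) :
    ((M.closureOp hE).cl A : Set E) = M.closure ↑A := Set.Finite.coe_toFinset _

lemma cl_eq_iff (A B : Finset E) :
    (M.closureOp hE).cl A = B ↔ M.closure ↑A = ↑B := by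
  constructor
  · intro h; rw [← cl_coe M hE, h]
  · intro h
    apply Finset.coe_injective
    rw [cl_coe M hE, h]

lemma indep_iff (I : Finset E) :
    (M.closureOp hE).Indep I ↔ M.Indep ↑I := by
  rw [Matroid.indep_iff_forall_closure_diff_ne]
  constructor
  · intro h e he
    have := h e he
    rw [← Finset.coe_ssubset, cl_coe M hE, cl_coe M hE, Finset.coe_erase] at this
    exact this.ne
  · intro h i hi
    rw [← Finset.coe_ssubset, cl_coe M hE, cl_coe M hE, Finset.coe_erase]
    exact (M.closure_subset_closure Set.diff_subset).ssubset_of_ne (h hi)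

lemma properFlat_iff (F : Finset E) :
    (M.closureOp hE).IsProperFlat F ↔ (M.closure ↑F = ↑F ∧ F ≠ Finset.univ) := by
  unfold ClosureOp.IsProperFlat
  rw [cl_eq_iff]

/-! ### Decomposition of faces of the augmented Bergman complex -/

lemma face_decomp (s : Finset (E ⊕ Finset E)) :
    s = (ClosureOp.faceIndep s).image Sum.inl ∪ (ClosureOp.faceFlag s).image Sum.inr := by
  ext x
  cases x with
  | inl i => simp [ClosureOp.faceIndep, ClosureOp.faceFlag]
  | inr F => simp [ClosureOp.faceIndep, ClosureOp.faceFlag]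

lemma faceIndep_mk (I : Finset E) (C : Finset (Finset E)) :
    ClosureOp.faceIndep (I.image Sum.inl ∪ C.image Sum.inr) = I := by
  ext i
  simp [ClosureOp.faceIndep]

lemma faceFlag_mk (I : Finset E) (C : Finset (Finset E)) :
    ClosureOp.faceFlag (I.image Sum.inl ∪ C.image Sum.inr) = C := by
  ext F
  simp [ClosureOp.faceFlag]

lemma card_mk (I : Finset E) (C : Finset (Finset E)) :
    (I.image Sum.inl ∪ C.image Sum.inr : Finset (E ⊕ Finset E)).card
      = I.card + C.card := by
  rw [Finset.card_union_of_disjoint (by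
    simp only [Finset.disjoint_left, Finset.mem_image]
    rintro x ⟨i, _, rfl⟩ ⟨F, _, h⟩
    exact absurd h (by simp)),
    Finset.card_image_of_injective _ Sum.inl_injective,
    Finset.card_image_of_injective _ Sum.inr_injective]


/-! ### Contraction bridge -/

/-- lift a subset of the contraction's ground set back to `E` -/
def liftC (F : Finset E) (D : Finset {x // x ∉ F}) : Finset E :=
  D.image Subtype.val ∪ F

/-- restrict a subset of `E` to the contraction's ground set -/
def dropC (F : Finset E) (G : Finset E) : Finset {x // x ∉ F} :=
  G.subtype (· ∉ F)

variable {F : Finset E}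

lemma drop_lift (D : Finset {x // x ∉ F}) : dropC F (liftC F D) = D := by
  ext ⟨x, hx⟩
  simp [dropC, liftC, hx]

lemma lift_drop {G : Finset E} (h : F ⊆ G) : liftC F (dropC F G) = G := by
  ext x
  by_cases hx : x ∈ F
  · simp [liftC, dropC, hx, h hx]
  · simp [liftC, dropC, hx]

lemma subset_lift (D : Finset {x // x ∉ F}) : F ⊆ liftC F D :=
  Finset.subset_union_right

lemma lift_mono {D D' : Finset {x // x ∉ F}} (h : D ⊆ D') : liftC F D ⊆ liftC F D' :=
  Finset.union_subset_union_left (Finset.image_subset_image h)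

lemma drop_mono {G G' : Finset E} (h : G ⊆ G') : dropC F G ⊆ dropC F G' := by
  intro x hx
  rw [dropC, Finset.mem_subtype] at *
  exact h hx

lemma lift_inj : Function.Injective (liftC F) := by
  intro D D' h
  rw [← drop_lift (F := F) D, ← drop_lift (F := F) D', h]

lemma lift_eq_univ_iff {D : Finset {x // x ∉ F}} :
    liftC F D = Finset.univ ↔ D = Finset.univ := by
  constructor
  · intro h
    rw [← drop_lift (F := F) D, h]
    ext ⟨x, hx⟩
    simp [dropC, hx]
  · rintro rfl
    ext x
    by_cases hx : x ∈ F <;> simp [liftC, hx]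

lemma drop_self : dropC F F = ∅ := by
  ext ⟨x, hx⟩
  simp [dropC, hx]

lemma contract_cl (f : ClosureOp E) (D : Finset {x // x ∉ F}) :
    (f.contract F).cl D = dropC F (f.cl (liftC F D)) := rfl

lemma subset_cl_lift (f : ClosureOp E) (D : Finset {x // x ∉ F}) :
    F ⊆ f.cl (liftC F D) :=
  (subset_lift D).trans (f.subset_cl _)

lemma contract_properFlat_iff (f : ClosureOp E) (D : Finset {x // x ∉ F}) :
    (f.contract F).IsProperFlat D ↔ f.IsProperFlat (liftC F D) := by
  unfold ClosureOp.IsProperFlat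
  rw [contract_cl]
  constructor
  · rintro ⟨h1, h2⟩
    refine ⟨?_, fun h => h2 (lift_eq_univ_iff.mp h)⟩
    have h3 : liftC F (dropC F (f.cl (liftC F D))) = liftC F D := by rw [h1]
    rwa [lift_drop (subset_cl_lift f D)] at h3
  · rintro ⟨h1, h2⟩
    exact ⟨by rw [h1, drop_lift], fun h => h2 (by rw [h]; exact lift_eq_univ_iff.mpr rfl)⟩

lemma contract_cl_empty (f : ClosureOp E) (hF : f.cl F = F) :
    (f.contract F).cl ∅ = ∅ := by
  rw [contract_cl]
  have : liftC F (∅ : Finset {x // x ∉ F}) = F := by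
    ext x; simp [liftC]
  rw [this, hF, drop_self]


/-! ### Strict chains and the Bergman complex of a contraction -/

/-- Chains of proper flats strictly above `F`, as a finset. -/
noncomputable def strictChainsF (f : ClosureOp E) (F : Finset E) : Finset (Finset (Finset E)) :=
  {C | (∀ G ∈ C, f.IsProperFlat G ∧ F ⊂ G) ∧
    ∀ G ∈ C, ∀ G' ∈ C, G ⊆ G' ∨ G' ⊆ G}.toFinite.toFinset

lemma mem_strictChainsF {f : ClosureOp E} {F : Finset E} {C : Finset (Finset E)} :
    C ∈ strictChainsF f F ↔ (∀ G ∈ C, f.IsProperFlat G ∧ F ⊂ G) ∧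
      ∀ G ∈ C, ∀ G' ∈ C, G ⊆ G' ∨ G' ⊆ G := by
  rw [strictChainsF, Set.Finite.mem_toFinset, Set.mem_setOf_eq]

lemma drop_image_mem_bergman {f : ClosureOp E} (hF : f.cl F = F)
    {C : Finset (Finset E)} (hC : C ∈ strictChainsF f F) :
    C.image (dropC F) ∈ (f.contract F).bergman := by
  rw [mem_strictChainsF] at hC
  constructor
  · intro G' hG'
    obtain ⟨G, hG, rfl⟩ := Finset.mem_image.mp hG'
    refine ⟨?_, ?_⟩
    · rw [contract_properFlat_iff, lift_drop (hC.1 G hG).2.subset]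
      exact (hC.1 G hG).1
    · rw [contract_cl_empty f hF]
      obtain ⟨x, hxG, hxF⟩ := Finset.exists_of_ssubset (hC.1 G hG).2
      exact Finset.empty_ssubset.mpr ⟨⟨x, hxF⟩, by simp [dropC, hxG]⟩
  · intro G1 hG1 G2 hG2
    obtain ⟨H1, hH1, rfl⟩ := Finset.mem_image.mp hG1
    obtain ⟨H2, hH2, rfl⟩ := Finset.mem_image.mp hG2
    rcases hC.2 H1 hH1 H2 hH2 with h | h
    · exact Or.inl (drop_mono h)
    · exact Or.inr (drop_mono h)

lemma lift_image_mem_strictChainsF {f : ClosureOp E} (hF : f.cl F = F)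
    {D : Finset (Finset {x // x ∉ F})} (hD : D ∈ (f.contract F).bergman) :
    D.image (liftC F) ∈ strictChainsF f F := by
  rw [mem_strictChainsF]
  constructor
  · intro G hG
    obtain ⟨G', hG', rfl⟩ := Finset.mem_image.mp hG
    refine ⟨(contract_properFlat_iff f G').mp (hD.1 G' hG').1, ?_⟩
    refine (subset_lift G').ssubset_of_ne fun h => ?_
    have h3 := (hD.1 G' hG').2
    rw [contract_cl_empty f hF] at h3
    obtain ⟨⟨v, hv⟩, hvG⟩ := Finset.empty_ssubset.mp h3
    have hvmem : v ∈ liftC F G' :=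
      Finset.mem_union_left _ (Finset.mem_image_of_mem _ hvG)
    rw [← h] at hvmem
    exact hv hvmem
  · intro G1 hG1 G2 hG2
    obtain ⟨H1, hH1, rfl⟩ := Finset.mem_image.mp hG1
    obtain ⟨H2, hH2, rfl⟩ := Finset.mem_image.mp hG2
    rcases hD.2 H1 hH1 H2 hH2 with h | h
    · exact Or.inl (lift_mono h)
    · exact Or.inr (lift_mono h)

lemma drop_image_card {C : Finset (Finset E)} (hC : ∀ G ∈ C, F ⊆ G) :
    (C.image (dropC F)).card = C.card :=
  Finset.card_image_of_injOn (fun a ha b hb h => by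
    rw [← lift_drop (hC a ha), ← lift_drop (hC b hb), h])

lemma lift_image_card (D : Finset (Finset {x // x ∉ F})) :
    (D.image (liftC F)).card = D.card :=
  Finset.card_image_of_injective _ lift_inj

lemma drop_lift_image {C : Finset (Finset E)} (hC : ∀ G ∈ C, F ⊆ G) :
    (C.image (dropC F)).image (liftC F) = C := by
  rw [Finset.image_image]
  refine Finset.image_congr (fun G hG => lift_drop (hC G hG)) |>.trans Finset.image_id

lemma lift_drop_image (D : Finset (Finset {x // x ∉ F})) :
    (D.image (liftC F)).image (dropC F) = D := by
  rw [Finset.image_image]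
  exact (Finset.image_congr (fun G _ => drop_lift G)).trans Finset.image_id

/-! ### sup lemmas -/

lemma mrk_lt_univ (hE' : M.E = Set.univ) {F : Finset E} (hF : M.closure ↑F = ↑F)
    (hne : F ≠ Finset.univ) :
    mrk M F < mrk M Finset.univ :=
  mrk_lt_of_flat_ssubset M hF (flat_univ M hE') (Finset.ssubset_univ_iff.mpr hne)

lemma strictChainsF_card_le {F : Finset E} (hF : M.closure ↑F = ↑F)
    {C : Finset (Finset E)} (hC : C ∈ strictChainsF (M.closureOp hE) F) :
    C.card ≤ mrk M Finset.univ - mrk M F - 1 := by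
  rw [mem_strictChainsF] at hC
  have hub : ∀ G ∈ C, mrk M G ≤ mrk M Finset.univ - 1 := fun G hG => by
    have h := (properFlat_iff M hE G).mp (hC.1 G hG).1
    have := mrk_lt_univ M hE h.1 h.2
    omega
  have hlb : ∀ G ∈ C, mrk M F + 1 ≤ mrk M G := fun G hG => by
    have h := (properFlat_iff M hE G).mp (hC.1 G hG).1
    have := mrk_lt_of_flat_ssubset M hF h.1 (hC.1 G hG).2
    omega
  have hbd := chain_card_le M (fun G hG => ((properFlat_iff M hE G).mp (hC.1 G hG).1).1)
    hlb hub hC.2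
  have : C.card = 0 ∨ mrk M F + 1 ≤ mrk M Finset.univ - 1 := by
    rcases Finset.eq_empty_or_nonempty C with rfl | ⟨G, hG⟩
    · exact Or.inl rfl
    · exact Or.inr ((hlb G hG).trans (hub G hG))
  omega

lemma sup_bergman_contract {F : Finset E} (hF : M.closure ↑F = ↑F)
    (hne : F ≠ Finset.univ) :
    ((M.closureOp hE).contract F).bergman.toFinite.toFinset.sup Finset.card
      = mrk M Finset.univ - mrk M F - 1 := by
  have hFcl : (M.closureOp hE).cl F = F := (cl_eq_iff M hE F F).mpr hF
  apply le_antisymm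
  · refine Finset.sup_le fun D hD => ?_
    rw [Set.Finite.mem_toFinset] at hD
    have h1 := lift_image_mem_strictChainsF hFcl hD
    have h2 := strictChainsF_card_le M hE hF h1
    rwa [lift_image_card] at h2
  · have hlt := mrk_lt_univ M hE hF hne
    obtain ⟨C, hcard, hmem, hcomp⟩ := exists_strict_chain M hE (mrk M Finset.univ - mrk M F)
      F hF hne (by omega)
    have hCs : C ∈ strictChainsF (M.closureOp hE) F := by
      rw [mem_strictChainsF]
      exact ⟨fun G hG => ⟨(properFlat_iff M hE G).mpr ⟨(hmem G hG).1, (hmem G hG).2.2⟩,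
        (hmem G hG).2.1⟩, hcomp⟩
    have hmemB := drop_image_mem_bergman hFcl hCs
    have := Finset.le_sup (f := Finset.card)
      (((M.closureOp hE).contract F).bergman.toFinite.mem_toFinset.mpr hmemB)
    rw [drop_image_card (fun G hG => (hmem G hG).2.1.subset), hcard] at this
    omega

lemma hPoly_singleton_empty {V : Type*} [Fintype V] [DecidableEq V] :
    hPoly ({∅} : Set (Finset V)) = 1 := by
  have ht : ({∅} : Set (Finset V)).toFinite.toFinset = {∅} := by ext s; simp
  simp [hPoly, ht]

lemma bergman_of_full (f : ClosureOp E) {F : Finset E} (hFu : ∀ x : E, x ∈ F) :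
    (f.contract F).bergman = {∅} := by
  have hie : IsEmpty {x // x ∉ F} := ⟨fun x => x.2 (hFu x.1)⟩
  ext C
  simp only [Set.mem_singleton_iff]
  constructor
  · intro hC
    rw [Finset.eq_empty_iff_forall_notMem]
    intro G hG
    exact (hC.1 G hG).1.2 (Finset.eq_univ_of_forall (fun x => (hie.false x).elim))
  · rintro rfl
    exact ⟨fun G hG => absurd hG (Finset.notMem_empty G),
      fun G hG => absurd hG (Finset.notMem_empty G)⟩

lemma sup_aug :
    (M.closureOp hE).augBergman.toFinite.toFinset.sup Finset.card = mrk M Finset.univ := by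
  apply le_antisymm
  · refine Finset.sup_le fun s hs => ?_
    rw [Set.Finite.mem_toFinset] at hs
    obtain ⟨I, C, rfl, hInd, hfl, hcomp, hcl⟩ := hs
    rw [card_mk]
    have hIcard : I.card = mrk M ((M.closureOp hE).cl I) :=
      (mrk_cl_indep M ((indep_iff M hE I).mp hInd)).symm
    have hIle : mrk M ((M.closureOp hE).cl I) ≤ mrk M Finset.univ :=
      mrk_mono M (Finset.subset_univ _)
    have hCle : C.card ≤ mrk M Finset.univ - I.card := by
      rcases Finset.eq_empty_or_nonempty C with rfl | ⟨G0, hG0⟩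
      · simp
      have hub : ∀ G ∈ C, mrk M G ≤ mrk M Finset.univ - 1 := fun G hG => by
        have h := (properFlat_iff M hE G).mp (hfl G hG)
        have := mrk_lt_univ M hE h.1 h.2
        omega
      have hlb : ∀ G ∈ C, I.card ≤ mrk M G := fun G hG => by
        rw [hIcard]
        exact mrk_mono M (hcl G hG)
      have hbd := chain_card_le M (fun G hG => ((properFlat_iff M hE G).mp (hfl G hG)).1)
        hlb hub hcomp
      have h0 := (hlb G0 hG0).trans (hub G0 hG0)
      have hflG0 := (properFlat_iff M hE G0).mp (hfl G0 hG0)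
      have h1 := mrk_lt_univ M hE hflG0.1 hflG0.2
      omega
    omega
  · obtain ⟨B, hB⟩ := M.exists_isBase
    set B' : Finset E := B.toFinite.toFinset with hB'
    have hBcoe : (↑B' : Set E) = B := Set.Finite.coe_toFinset _
    have hInd : (M.closureOp hE).Indep B' := by
      rw [indep_iff M hE, hBcoe]
      exact hB.indep
    have hmem : (B'.image Sum.inl ∪ (∅ : Finset (Finset E)).image Sum.inr)
        ∈ (M.closureOp hE).augBergman := by
      exact ⟨B', ∅, rfl, hInd, fun G hG => absurd hG (Finset.notMem_empty G),
        fun G hG => absurd hG (Finset.notMem_empty G),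
        fun G hG => absurd hG (Finset.notMem_empty G)⟩
    have hle := Finset.le_sup (f := Finset.card)
      ((M.closureOp hE).augBergman.toFinite.mem_toFinset.mpr hmem)
    rw [card_mk] at hle
    have hBr : B'.card = mrk M Finset.univ := by
      have hbg : M.IsBasis' B (↑(Finset.univ : Finset E) : Set E) := by
        rw [Finset.coe_univ, ← hE]
        exact hB.isBasis_ground.isBasis'
      rw [← mrk_eq_of_basis' hbg, hB', Set.ncard_eq_toFinset_card B (Set.toFinite B)]
    simp only [Finset.card_empty, add_zero] at hle
    omega


/-! ### The sum decomposition -/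

/-- Chains of proper flats above `f.cl I`, as a finset. -/
noncomputable def chainsF (f : ClosureOp E) (I : Finset E) : Finset (Finset (Finset E)) :=
  {C | (∀ G ∈ C, f.IsProperFlat G ∧ f.cl I ⊆ G) ∧
    ∀ G ∈ C, ∀ G' ∈ C, G ⊆ G' ∨ G' ⊆ G}.toFinite.toFinset

lemma mem_chainsF {f : ClosureOp E} {I : Finset E} {C : Finset (Finset E)} :
    C ∈ chainsF f I ↔ (∀ G ∈ C, f.IsProperFlat G ∧ f.cl I ⊆ G) ∧
      ∀ G ∈ C, ∀ G' ∈ C, G ⊆ G' ∨ G' ⊆ G := by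
  rw [chainsF, Set.Finite.mem_toFinset, Set.mem_setOf_eq]

open Polynomial in
lemma hPoly_aug_eq_double_sum :
    hPoly (M.closureOp hE).augBergman
      = ∑ I ∈ ({I : Finset E | (M.closureOp hE).Indep I}).toFinite.toFinset,
          ∑ C ∈ chainsF (M.closureOp hE) I,
            X ^ (I.card + C.card)
              * (1 - X) ^ (mrk M Finset.univ - (I.card + C.card)) := by
  unfold hPoly
  rw [sup_aug M hE]
  trans ∑ p ∈ (({I : Finset E | (M.closureOp hE).Indep I}).toFinite.toFinset).sigma
      (fun I => chainsF (M.closureOp hE) I),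
      X ^ (p.1.card + p.2.card) * (1 - X) ^ (mrk M Finset.univ - (p.1.card + p.2.card))
  swap
  · rw [Finset.sum_sigma]
  refine Finset.sum_nbij'
    (fun s => ⟨ClosureOp.faceIndep s, ClosureOp.faceFlag s⟩)
    (fun p => p.1.image Sum.inl ∪ p.2.image Sum.inr) ?_ ?_ ?_ ?_ ?_
  · intro s hs
    rw [Set.Finite.mem_toFinset] at hs
    obtain ⟨I, C, rfl, hInd, hfl, hcomp, hcl⟩ := hs
    rw [Finset.mem_sigma, faceIndep_mk, faceFlag_mk]
    exact ⟨Set.Finite.mem_toFinset _ |>.mpr hInd,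
      mem_chainsF.mpr ⟨fun G hG => ⟨hfl G hG, hcl G hG⟩, hcomp⟩⟩
  · rintro ⟨I, C⟩ hp
    rw [Finset.mem_sigma] at hp
    rw [Set.Finite.mem_toFinset]
    obtain ⟨hmem, hcomp⟩ := mem_chainsF.mp hp.2
    exact ⟨I, C, rfl, Set.Finite.mem_toFinset _ |>.mp hp.1,
      fun G hG => (hmem G hG).1, hcomp, fun G hG => (hmem G hG).2⟩
  · intro s _
    exact (face_decomp s).symm
  · rintro ⟨I, C⟩ _
    simp only [faceIndep_mk, faceFlag_mk]
  · intro s hs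
    conv_lhs => rw [face_decomp s]
    rw [card_mk]

open Polynomial in
lemma sum_strict_eq (F : Finset E) (hF : M.closure ↑F = ↑F) (hne : F ≠ Finset.univ) :
    ∑ D ∈ strictChainsF (M.closureOp hE) F,
      X ^ D.card * (1 - X) ^ ((mrk M Finset.univ - mrk M F - 1) - D.card)
    = hPoly (((M.closureOp hE).contract F).bergman) := by
  have hFcl : (M.closureOp hE).cl F = F := (cl_eq_iff M hE F F).mpr hF
  unfold hPoly
  rw [sup_bergman_contract M hE hF hne]
  refine Finset.sum_nbij' (fun C => C.image (dropC F)) (fun D => D.image (liftC F))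
    ?_ ?_ ?_ ?_ ?_
  · intro C hC
    rw [Set.Finite.mem_toFinset]
    exact drop_image_mem_bergman hFcl hC
  · intro D hD
    rw [Set.Finite.mem_toFinset] at hD
    exact lift_image_mem_strictChainsF hFcl hD
  · intro C hC
    exact drop_lift_image (fun G hG => ((mem_strictChainsF.mp hC).1 G hG).2.subset)
  · intro D _
    exact lift_drop_image D
  · intro C hC
    rw [drop_image_card (fun G hG => ((mem_strictChainsF.mp hC).1 G hG).2.subset)]

open Polynomial in
lemma inner_sum (I : Finset E) (hI : (M.closureOp hE).Indep I) :
    ∑ C ∈ chainsF (M.closureOp hE) I,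
      X ^ (I.card + C.card) * (1 - X) ^ (mrk M Finset.univ - (I.card + C.card))
    = X ^ I.card
        * hPoly (((M.closureOp hE).contract ((M.closureOp hE).cl I)).bergman) := by
  have hkF : mrk M ((M.closureOp hE).cl I) = I.card :=
    mrk_cl_indep M ((indep_iff M hE I).mp hI)
  have hFflat : M.closure ↑((M.closureOp hE).cl I) = ↑((M.closureOp hE).cl I) := by
    rw [cl_coe M hE I, M.closure_closure, ← cl_coe M hE I]
  have hFcl : (M.closureOp hE).cl ((M.closureOp hE).cl I) = (M.closureOp hE).cl I :=
    (M.closureOp hE).cl_idem I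
  by_cases hb : (M.closureOp hE).cl I = Finset.univ
  · have hchains : chainsF (M.closureOp hE) I = {∅} := by
      ext C
      rw [mem_chainsF, Finset.mem_singleton]
      constructor
      · rintro ⟨hall, -⟩
        rw [Finset.eq_empty_iff_forall_notMem]
        intro G hG
        refine (hall G hG).1.2 ?_
        exact Finset.eq_univ_iff_forall.mpr fun x => (hall G hG).2 (hb ▸ Finset.mem_univ x)
      · rintro rfl
        exact ⟨fun G hG => absurd hG (Finset.notMem_empty G),
          fun G hG => absurd hG (Finset.notMem_empty G)⟩
    rw [hchains, Finset.sum_singleton, bergman_of_full _ (fun x => hb ▸ Finset.mem_univ x),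
      hPoly_singleton_empty]
    have hIr : I.card = mrk M Finset.univ := by rw [← hkF, hb]
    rw [Finset.card_empty, add_zero, ← hIr, Nat.sub_self, pow_zero, mul_one]
  · -- non-basis case
    have hklt : I.card < mrk M Finset.univ := hkF ▸ mrk_lt_univ M hE hFflat hb
    have hPF : (M.closureOp hE).IsProperFlat ((M.closureOp hE).cl I) := ⟨hFcl, hb⟩
    have hsplit : chainsF (M.closureOp hE) I
        = strictChainsF (M.closureOp hE) ((M.closureOp hE).cl I)
          ∪ (strictChainsF (M.closureOp hE) ((M.closureOp hE).cl I)).image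
              (insert ((M.closureOp hE).cl I)) := by
      ext C
      rw [mem_chainsF, Finset.mem_union, mem_strictChainsF, Finset.mem_image]
      constructor
      · rintro ⟨hall, hcomp⟩
        by_cases hFC : (M.closureOp hE).cl I ∈ C
        · right
          refine ⟨C.erase _, mem_strictChainsF.mpr ⟨fun G hG => ?_, fun G hG G' hG' =>
            hcomp G (Finset.mem_of_mem_erase hG) G' (Finset.mem_of_mem_erase hG')⟩,
            Finset.insert_erase hFC⟩
          refine ⟨(hall G (Finset.mem_of_mem_erase hG)).1,
            ((hall G (Finset.mem_of_mem_erase hG)).2).ssubset_of_ne ?_⟩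
          exact fun h => (Finset.ne_of_mem_erase hG) h.symm
        · left
          exact ⟨fun G hG => ⟨(hall G hG).1,
            ((hall G hG).2).ssubset_of_ne (fun h => hFC (h ▸ hG))⟩, hcomp⟩
      · rintro (hC | ⟨D, hD, rfl⟩)
        · obtain ⟨hall, hcomp⟩ := hC
          exact ⟨fun G hG => ⟨(hall G hG).1, (hall G hG).2.subset⟩, hcomp⟩
        · obtain ⟨hall, hcomp⟩ := mem_strictChainsF.mp hD
          constructor
          · intro G hG
            rcases Finset.mem_insert.mp hG with rfl | hG
            · exact ⟨hPF, subset_rfl⟩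
            · exact ⟨(hall G hG).1, (hall G hG).2.subset⟩
          · intro G hG G' hG'
            rcases Finset.mem_insert.mp hG with rfl | hG
            · rcases Finset.mem_insert.mp hG' with rfl | hG'
              · exact Or.inl subset_rfl
              · exact Or.inl (hall G' hG').2.subset
            · rcases Finset.mem_insert.mp hG' with rfl | hG'
              · exact Or.inr (hall G hG).2.subset
              · exact hcomp G hG G' hG'
    have hnotmem : ∀ D ∈ strictChainsF (M.closureOp hE) ((M.closureOp hE).cl I),
        (M.closureOp hE).cl I ∉ D := by
      intro D hD hmem
      exact ((mem_strictChainsF.mp hD).1 _ hmem).2.ne rfl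
    have hdisj : Disjoint (strictChainsF (M.closureOp hE) ((M.closureOp hE).cl I))
        ((strictChainsF (M.closureOp hE) ((M.closureOp hE).cl I)).image
          (insert ((M.closureOp hE).cl I))) := by
      rw [Finset.disjoint_left]
      rintro C hC hC'
      obtain ⟨D, hD, rfl⟩ := Finset.mem_image.mp hC'
      exact hnotmem _ hC (Finset.mem_insert_self _ _)
    rw [hsplit, Finset.sum_union hdisj, Finset.sum_image (by
      intro D hD D' hD' h
      have h1 := hnotmem D hD
      have h2 := hnotmem D' hD'
      rw [← Finset.erase_insert h1, ← Finset.erase_insert h2, h]),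
      ← Finset.sum_add_distrib, ← sum_strict_eq M hE _ hFflat hb, Finset.mul_sum]
    refine Finset.sum_congr rfl fun D hD => ?_
    have hcard := strictChainsF_card_le M hE hFflat hD
    have hins : (insert ((M.closureOp hE).cl I) D).card = D.card + 1 :=
      Finset.card_insert_of_notMem (hnotmem D hD)
    rw [hins, hkF]
    have h1 : mrk M Finset.univ - (I.card + D.card)
        = (mrk M Finset.univ - I.card - 1 - D.card) + 1 := by omega
    have h2 : mrk M Finset.univ - (I.card + (D.card + 1))
        = mrk M Finset.univ - I.card - 1 - D.card := by omega
    rw [h1, h2]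
    ring

end AugAux

open Polynomial in
/-- For a matroid `M` on a finite ground set with closure operator
`cl`, the h-polynomial of the augmented Bergman complex satisfies
`h(Δ̂(M), t) = ∑_{I independent} t^{|I|} · h(Δ(M/cl(I)), t)`, and
`h(Δ(M/cl(I)), t) = 1` whenever `I` is a basis. -/
theorem hPoly_augBergman
    {E : Type*} [Fintype E] [DecidableEq E] (M : Matroid E) (hE : M.E = Set.univ) :
    (hPoly (M.closureOp hE).augBergman
      = ∑ I ∈ ({I : Finset E | (M.closureOp hE).Indep I}).toFinite.toFinset,
          X ^ I.card *
            hPoly (((M.closureOp hE).contract ((M.closureOp hE).cl I)).bergman)) ∧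
    ∀ I : Finset E, (M.closureOp hE).IsBasis I →
      hPoly (((M.closureOp hE).contract ((M.closureOp hE).cl I)).bergman) = 1 := by
  constructor
  · rw [AugAux.hPoly_aug_eq_double_sum M hE]
    exact Finset.sum_congr rfl fun I hI =>
      AugAux.inner_sum M hE I (Set.Finite.mem_toFinset _ |>.mp hI)
  · intro I hIb
    rw [AugAux.bergman_of_full _ (fun x => by rw [hIb.2]; exact Finset.mem_univ x)]
    exact AugAux.hPoly_singleton_empty
end

section
/- There exists a closure operator f on a finite set E (one may take E = {1,2,3,4,5} with proper flats the empty set, all singletons, and the pairs {1,2}, {1,3}, {2,3}, {3,4}, {3,5}, {4,5}) such that the augmented Bergman complex Δ̂(f) is shellable, the independence complex I(f) is not shellable, and Δ̂(f) admits no shelling order in which all facets corresponding to bases appear first. -/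
open Finset

/-! ## Auxiliary constructions for the proof -/

namespace SB18

abbrev VV := Fin 4 ⊕ Finset (Fin 4)
abbrev yy (a : Fin 4) : VV := Sum.inl a
abbrev xx (F : Finset (Fin 4)) : VV := Sum.inr F

def myCl (A : Finset (Fin 4)) : Finset (Fin 4) :=
  if (0 ∈ A ∨ 1 ∈ A) then A ∪ {2,3} else A

def myOp : ClosureOp (Fin 4) where
  cl := myCl
  subset_cl := by decide
  cl_mono := by
    intro A B h
    exact (by decide : ∀ A B : Finset (Fin 4), A ⊆ B → myCl A ⊆ myCl B) A B h
  cl_idem := by decide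

def FacesL : List (Finset VV) := [(∅ : Finset VV),
  {xx (∅ : Finset (Fin 4))},
  {xx {0,2,3}},
  {xx {1,2,3}},
  {xx {2,3}},
  {xx {2}},
  {xx {3}},
  {yy 0},
  {yy 1},
  {yy 2},
  {yy 3},
  {xx (∅ : Finset (Fin 4)), xx {0,2,3}},
  {xx (∅ : Finset (Fin 4)), xx {1,2,3}},
  {xx (∅ : Finset (Fin 4)), xx {2,3}},
  {xx (∅ : Finset (Fin 4)), xx {2}},
  {xx (∅ : Finset (Fin 4)), xx {3}},
  {xx {2,3}, xx {0,2,3}},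
  {xx {2}, xx {0,2,3}},
  {xx {3}, xx {0,2,3}},
  {yy 0, xx {0,2,3}},
  {yy 2, xx {0,2,3}},
  {yy 3, xx {0,2,3}},
  {xx {2,3}, xx {1,2,3}},
  {xx {2}, xx {1,2,3}},
  {xx {3}, xx {1,2,3}},
  {yy 1, xx {1,2,3}},
  {yy 2, xx {1,2,3}},
  {yy 3, xx {1,2,3}},
  {xx {2}, xx {2,3}},
  {xx {3}, xx {2,3}},
  {yy 2, xx {2,3}},
  {yy 3, xx {2,3}},
  {yy 2, xx {2}},
  {yy 3, xx {3}},
  {yy 0, yy 1},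
  {yy 2, yy 3},
  {xx (∅ : Finset (Fin 4)), xx {2,3}, xx {0,2,3}},
  {xx (∅ : Finset (Fin 4)), xx {2}, xx {0,2,3}},
  {xx (∅ : Finset (Fin 4)), xx {3}, xx {0,2,3}},
  {xx (∅ : Finset (Fin 4)), xx {2,3}, xx {1,2,3}},
  {xx (∅ : Finset (Fin 4)), xx {2}, xx {1,2,3}},
  {xx (∅ : Finset (Fin 4)), xx {3}, xx {1,2,3}},
  {xx (∅ : Finset (Fin 4)), xx {2}, xx {2,3}},
  {xx (∅ : Finset (Fin 4)), xx {3}, xx {2,3}},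
  {xx {2}, xx {2,3}, xx {0,2,3}},
  {xx {3}, xx {2,3}, xx {0,2,3}},
  {yy 2, xx {2,3}, xx {0,2,3}},
  {yy 3, xx {2,3}, xx {0,2,3}},
  {yy 2, xx {2}, xx {0,2,3}},
  {yy 3, xx {3}, xx {0,2,3}},
  {yy 2, yy 3, xx {0,2,3}},
  {xx {2}, xx {2,3}, xx {1,2,3}},
  {xx {3}, xx {2,3}, xx {1,2,3}},
  {yy 2, xx {2,3}, xx {1,2,3}},
  {yy 3, xx {2,3}, xx {1,2,3}},
  {yy 2, xx {2}, xx {1,2,3}},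
  {yy 3, xx {3}, xx {1,2,3}},
  {yy 2, yy 3, xx {1,2,3}},
  {yy 2, xx {2}, xx {2,3}},
  {yy 3, xx {3}, xx {2,3}},
  {yy 2, yy 3, xx {2,3}},
  {xx (∅ : Finset (Fin 4)), xx {2}, xx {2,3}, xx {0,2,3}},
  {xx (∅ : Finset (Fin 4)), xx {3}, xx {2,3}, xx {0,2,3}},
  {xx (∅ : Finset (Fin 4)), xx {2}, xx {2,3}, xx {1,2,3}},
  {xx (∅ : Finset (Fin 4)), xx {3}, xx {2,3}, xx {1,2,3}},
  {yy 2, xx {2}, xx {2,3}, xx {0,2,3}},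
  {yy 3, xx {3}, xx {2,3}, xx {0,2,3}},
  {yy 2, yy 3, xx {2,3}, xx {0,2,3}},
  {yy 2, xx {2}, xx {2,3}, xx {1,2,3}},
  {yy 3, xx {3}, xx {2,3}, xx {1,2,3}},
  {yy 2, yy 3, xx {2,3}, xx {1,2,3}}]

def FacetL : List (Finset VV) := [{xx (∅ : Finset (Fin 4)), xx {3}, xx {2,3}, xx {1,2,3}},
  {yy 3, xx {3}, xx {2,3}, xx {1,2,3}},
  {yy 2, yy 3, xx {2,3}, xx {1,2,3}},
  {xx (∅ : Finset (Fin 4)), xx {2}, xx {2,3}, xx {1,2,3}},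
  {yy 3, xx {3}, xx {2,3}, xx {0,2,3}},
  {yy 2, yy 3, xx {2,3}, xx {0,2,3}},
  {xx (∅ : Finset (Fin 4)), xx {3}, xx {2,3}, xx {0,2,3}},
  {xx (∅ : Finset (Fin 4)), xx {2}, xx {2,3}, xx {0,2,3}},
  {yy 2, xx {2}, xx {2,3}, xx {0,2,3}},
  {yy 2, xx {2}, xx {2,3}, xx {1,2,3}},
  {yy 0, xx {0,2,3}},
  {yy 1, xx {1,2,3}},
  {yy 0, yy 1}]

def ILL : List (Finset (Fin 4)) := [(∅ : Finset (Fin 4)),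
  {0},
  {1},
  {2},
  {3},
  {0,1},
  {2,3}]

def M1 : List (Finset VV) := [(∅ : Finset VV),
  {xx {1,2,3}},
  {xx {2,3}},
  {xx {3}},
  {xx {2,3}, xx {1,2,3}},
  {xx {3}, xx {1,2,3}},
  {xx {3}, xx {2,3}},
  {xx {3}, xx {2,3}, xx {1,2,3}}]

def M2 : List (Finset VV) := [(∅ : Finset VV),
  {xx {1,2,3}},
  {xx {2,3}},
  {yy 3},
  {xx {2,3}, xx {1,2,3}},
  {yy 3, xx {1,2,3}},
  {yy 3, xx {2,3}},
  {yy 3, xx {2,3}, xx {1,2,3}}]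

def M3 : List (Finset VV) := [(∅ : Finset VV),
  {xx (∅ : Finset (Fin 4))},
  {xx {1,2,3}},
  {xx {2,3}},
  {xx (∅ : Finset (Fin 4)), xx {1,2,3}},
  {xx (∅ : Finset (Fin 4)), xx {2,3}},
  {xx {2,3}, xx {1,2,3}},
  {xx (∅ : Finset (Fin 4)), xx {2,3}, xx {1,2,3}}]

def M4 : List (Finset VV) := [(∅ : Finset VV),
  {xx {2,3}},
  {xx {3}},
  {yy 3},
  {xx {3}, xx {2,3}},
  {yy 3, xx {2,3}},
  {yy 3, xx {3}},
  {yy 3, xx {3}, xx {2,3}}]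

def M5 : List (Finset VV) := [(∅ : Finset VV),
  {xx {0,2,3}},
  {xx {2,3}},
  {yy 2},
  {yy 3},
  {xx {2,3}, xx {0,2,3}},
  {yy 3, xx {0,2,3}},
  {yy 2, xx {2,3}},
  {yy 3, xx {2,3}},
  {yy 2, yy 3},
  {yy 3, xx {2,3}, xx {0,2,3}},
  {yy 2, yy 3, xx {2,3}}]

def M6 : List (Finset VV) := [(∅ : Finset VV),
  {xx (∅ : Finset (Fin 4))},
  {xx {0,2,3}},
  {xx {2,3}},
  {xx {3}},
  {xx (∅ : Finset (Fin 4)), xx {2,3}},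
  {xx (∅ : Finset (Fin 4)), xx {3}},
  {xx {2,3}, xx {0,2,3}},
  {xx {3}, xx {0,2,3}},
  {xx {3}, xx {2,3}},
  {xx (∅ : Finset (Fin 4)), xx {3}, xx {2,3}},
  {xx {3}, xx {2,3}, xx {0,2,3}}]

def M7 : List (Finset VV) := [(∅ : Finset VV),
  {xx (∅ : Finset (Fin 4))},
  {xx {0,2,3}},
  {xx {2,3}},
  {xx {2}},
  {xx (∅ : Finset (Fin 4)), xx {0,2,3}},
  {xx (∅ : Finset (Fin 4)), xx {2,3}},
  {xx (∅ : Finset (Fin 4)), xx {2}},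
  {xx {2,3}, xx {0,2,3}},
  {xx {2}, xx {2,3}},
  {xx (∅ : Finset (Fin 4)), xx {2,3}, xx {0,2,3}},
  {xx (∅ : Finset (Fin 4)), xx {2}, xx {2,3}}]

def M8 : List (Finset VV) := [(∅ : Finset VV),
  {xx {0,2,3}},
  {xx {2,3}},
  {xx {2}},
  {yy 2},
  {xx {2,3}, xx {0,2,3}},
  {xx {2}, xx {0,2,3}},
  {yy 2, xx {0,2,3}},
  {xx {2}, xx {2,3}},
  {yy 2, xx {2,3}},
  {xx {2}, xx {2,3}, xx {0,2,3}},
  {yy 2, xx {2,3}, xx {0,2,3}}]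

def M9 : List (Finset VV) := [(∅ : Finset VV),
  {xx {1,2,3}},
  {xx {2,3}},
  {xx {2}},
  {yy 2},
  {xx {2,3}, xx {1,2,3}},
  {xx {2}, xx {1,2,3}},
  {yy 2, xx {1,2,3}},
  {xx {2}, xx {2,3}},
  {yy 2, xx {2,3}},
  {yy 2, xx {2}},
  {xx {2}, xx {2,3}, xx {1,2,3}},
  {yy 2, xx {2,3}, xx {1,2,3}},
  {yy 2, xx {2}, xx {2,3}}]

def M10 : List (Finset VV) := [(∅ : Finset VV),
  {xx {0,2,3}}]

def M11 : List (Finset VV) := [(∅ : Finset VV),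
  {xx {1,2,3}}]

def M12 : List (Finset VV) := [(∅ : Finset VV),
  {yy 0},
  {yy 1}]

/-! ### Boolean reflection helpers -/

theorem allmem {α : Type*} {L : List α} {f : α → Bool} (h : L.all f = true)
    {a : α} (ha : a ∈ L) : f a = true := List.all_eq_true.mp h a ha

theorem impB {p q : Prop} [Decidable p] [Decidable q]
    (h : (!(decide p) || decide q) = true) (hp : p) : q := by
  rcases (Bool.or_eq_true _ _).mp h with h' | h'
  · rw [Bool.not_eq_true', decide_eq_false_iff_not] at h'
    exact absurd hp h'
  · exact of_decide_eq_true h'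

theorem impB_rev {p q : Prop} [Decidable p] [Decidable q] (h : p → q) :
    (!(decide p) || decide q) = true := by
  by_cases hp : p <;> simp [hp, h]

def allB (f : Bool → Bool) : Bool := f true && f false

theorem allB_elim {f : Bool → Bool} (h : allB f = true) (b : Bool) : f b = true := by
  rcases (Bool.and_eq_true _ _).mp h with ⟨h1, h2⟩
  cases b
  · exact h2
  · exact h1

/-! ### Hex subsets -/

def hexF {α : Type*} [DecidableEq α] (v1 v2 v3 v4 v5 v6 : α)
    (b1 b2 b3 b4 b5 b6 : Bool) : Finset α :=
  (if b1 then {v1} else ∅) ∪ (if b2 then {v2} else ∅) ∪ (if b3 then {v3} else ∅) ∪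
  (if b4 then {v4} else ∅) ∪ (if b5 then {v5} else ∅) ∪ (if b6 then {v6} else ∅)

theorem mem_ite_singleton {α : Type*} [DecidableEq α] {a v : α} {b : Bool} :
    a ∈ (if b then ({v} : Finset α) else ∅) ↔ b = true ∧ a = v := by
  cases b <;> simp

theorem mem_hexF {α : Type*} [DecidableEq α] {v1 v2 v3 v4 v5 v6 : α}
    {b1 b2 b3 b4 b5 b6 : Bool} {a : α} :
    a ∈ hexF v1 v2 v3 v4 v5 v6 b1 b2 b3 b4 b5 b6 ↔
      (b1 = true ∧ a = v1) ∨ (b2 = true ∧ a = v2) ∨ (b3 = true ∧ a = v3) ∨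
      (b4 = true ∧ a = v4) ∨ (b5 = true ∧ a = v5) ∨ (b6 = true ∧ a = v6) := by
  simp only [hexF, Finset.mem_union, mem_ite_singleton]
  tauto

theorem subset_hex {α : Type*} [DecidableEq α] {t : Finset α} {v1 v2 v3 v4 v5 v6 : α}
    (h : t ⊆ {v1, v2, v3, v4, v5, v6}) :
    ∃ b1 b2 b3 b4 b5 b6, t = hexF v1 v2 v3 v4 v5 v6 b1 b2 b3 b4 b5 b6 := by
  refine ⟨decide (v1 ∈ t), decide (v2 ∈ t), decide (v3 ∈ t), decide (v4 ∈ t),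
    decide (v5 ∈ t), decide (v6 ∈ t), ?_⟩
  ext a
  rw [mem_hexF]
  simp only [decide_eq_true_eq]
  constructor
  · intro ha
    have h2 := h ha
    simp only [Finset.mem_insert, Finset.mem_singleton] at h2
    rcases h2 with rfl | rfl | rfl | rfl | rfl | rfl
    · exact Or.inl ⟨ha, rfl⟩
    · exact Or.inr (Or.inl ⟨ha, rfl⟩)
    · exact Or.inr (Or.inr (Or.inl ⟨ha, rfl⟩))
    · exact Or.inr (Or.inr (Or.inr (Or.inl ⟨ha, rfl⟩)))
    · exact Or.inr (Or.inr (Or.inr (Or.inr (Or.inl ⟨ha, rfl⟩))))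
    · exact Or.inr (Or.inr (Or.inr (Or.inr (Or.inr ⟨ha, rfl⟩))))
  · rintro (⟨h1, rfl⟩ | ⟨h1, rfl⟩ | ⟨h1, rfl⟩ | ⟨h1, rfl⟩ | ⟨h1, rfl⟩ | ⟨h1, rfl⟩) <;> exact h1

/-! ### Pure-dimension criterion for list-presented intersection complexes -/

theorem pure_of_list {α : Type*} [DecidableEq α] (v1 v2 v3 v4 v5 v6 : α) (u : Finset α)
    (hu : u = {v1, v2, v3, v4, v5, v6}) (L M : List (Finset α)) (d : ℤ) (n : ℕ)
    (hd : (n : ℤ) = d + 1)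
    (hM1 : ∀ t ∈ M, (∃ s ∈ L, t ⊆ s) ∧ t ⊆ u)
    (hM2 : ∀ b1 b2 b3 b4 b5 b6 : Bool,
      (∃ s ∈ L, hexF v1 v2 v3 v4 v5 v6 b1 b2 b3 b4 b5 b6 ⊆ s) →
      hexF v1 v2 v3 v4 v5 v6 b1 b2 b3 b4 b5 b6 ∈ M)
    (hne : M ≠ [])
    (hcard : ∀ s ∈ M, (∀ t ∈ M, s ⊆ t → s = t) → s.card = n) :
    IsPureDim ({t | ∃ s ∈ L, t ⊆ s} ∩ {t | t ⊆ u}) d := by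
  have hX : ({t | ∃ s ∈ L, t ⊆ s} ∩ {t | t ⊆ u}) = {t | t ∈ M} := by
    ext t
    simp only [Set.mem_inter_iff, Set.mem_setOf_eq]
    constructor
    · rintro ⟨⟨s, hs, hts⟩, htu⟩
      rw [hu] at htu
      obtain ⟨b1, b2, b3, b4, b5, b6, rfl⟩ := subset_hex htu
      exact hM2 b1 b2 b3 b4 b5 b6 ⟨s, hs, hts⟩
    · intro ht
      exact hM1 t ht
  rw [hX]
  constructor
  · obtain ⟨t, ht⟩ := List.exists_mem_of_ne_nil M hne
    exact ⟨t, ht⟩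
  · rintro s ⟨hs, hmax⟩
    rw [← hd]
    exact_mod_cast hcard s hs (fun t ht hst => hmax t ht hst)

/-! ### The closure operator's basic enumerations -/

theorem indep_mem_ILL : ∀ I : Finset (Fin 4),
    (∀ i ∈ I, myCl (I.erase i) ⊂ myCl I) → I ∈ ILL := by decide

theorem flat_enum : ∀ F : Finset (Fin 4), myCl F = F ∧ F ≠ Finset.univ →
    F ∈ ({∅, {2}, {3}, {2,3}, {0,2,3}, {1,2,3}} : Finset (Finset (Fin 4))) := by decide

def hexPF (b1 b2 b3 b4 b5 b6 : Bool) : Finset (Finset (Fin 4)) :=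
  hexF ∅ {2} {3} {2,3} {0,2,3} {1,2,3} b1 b2 b3 b4 b5 b6

/-- Forward Bool fact: every admissible pair (independent set, chain) gives a face. -/
theorem H4 : (ILL.all fun I => allB fun b1 => allB fun b2 => allB fun b3 =>
    allB fun b4 => allB fun b5 => allB fun b6 =>
    (!(decide (∀ F ∈ hexPF b1 b2 b3 b4 b5 b6, ∀ G ∈ hexPF b1 b2 b3 b4 b5 b6, F ⊆ G ∨ G ⊆ F)) ||
    (!(decide (∀ F ∈ hexPF b1 b2 b3 b4 b5 b6, myCl I ⊆ F)) ||
    decide ((I.image Sum.inl ∪ (hexPF b1 b2 b3 b4 b5 b6).image Sum.inr) ∈ FacesL)))) = true := by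
  rfl

def fI (s : Finset VV) : Finset (Fin 4) := Finset.univ.filter (fun a => Sum.inl a ∈ s)
def fC (s : Finset VV) : Finset (Finset (Fin 4)) := Finset.univ.filter (fun F => Sum.inr F ∈ s)

/-- Backward Bool fact: every listed face decomposes and satisfies the conditions. -/
theorem H5 : (FacesL.all fun s =>
    decide (s = (fI s).image Sum.inl ∪ (fC s).image Sum.inr) &&
    decide (∀ i ∈ fI s, myCl ((fI s).erase i) ⊂ myCl (fI s)) &&
    decide (∀ F ∈ fC s, myCl F = F ∧ F ≠ Finset.univ) &&
    decide (∀ F ∈ fC s, ∀ G ∈ fC s, F ⊆ G ∨ G ⊆ F) &&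
    decide (∀ F ∈ fC s, myCl (fI s) ⊆ F)) = true := by
  rfl

theorem aug_eq : myOp.augBergman = {s : Finset VV | s ∈ FacesL} := by
  ext s
  simp only [ClosureOp.augBergman, Set.mem_setOf_eq]
  constructor
  · rintro ⟨I, C, rfl, hI, hPF, hchain, hbd⟩
    have hCsub : C ⊆ ({∅, {2}, {3}, {2,3}, {0,2,3}, {1,2,3}} : Finset (Finset (Fin 4))) := by
      intro F hF
      exact flat_enum F (hPF F hF)
    obtain ⟨b1, b2, b3, b4, b5, b6, rfl⟩ := subset_hex hCsub
    have hI' : I ∈ ILL := indep_mem_ILL I hI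
    have h1 := allmem H4 hI'
    have h2 := allB_elim (allB_elim (allB_elim (allB_elim (allB_elim (allB_elim h1 b1) b2) b3) b4) b5) b6
    rcases (Bool.or_eq_true _ _).mp h2 with h' | h2'
    · rw [Bool.not_eq_true', decide_eq_false_iff_not] at h'
      exact absurd hchain h'
    · rcases (Bool.or_eq_true _ _).mp h2' with h' | h''
      · rw [Bool.not_eq_true', decide_eq_false_iff_not] at h'
        exact absurd hbd h'
      · exact of_decide_eq_true h''
  · intro hs
    have h1 := allmem H5 hs
    rw [Bool.and_eq_true, Bool.and_eq_true, Bool.and_eq_true, Bool.and_eq_true] at h1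
    obtain ⟨⟨⟨⟨e1, e2⟩, e3⟩, e4⟩, e5⟩ := h1
    have p1 := of_decide_eq_true e1
    have p2 := of_decide_eq_true e2
    have p3 := of_decide_eq_true e3
    have p4 := of_decide_eq_true e4
    have p5 := of_decide_eq_true e5
    exact ⟨fI s, fC s, p1, p2, p3, p4, p5⟩

/-! ### Facet characterization of the augmented Bergman complex -/

theorem H1 : (FacetL.all fun s => decide (s ∈ FacesL)) = true := by rfl

theorem H2 : (FacetL.all fun s => FacesL.all fun t =>
    !(decide (s ⊆ t)) || decide (s = t)) = true := by rfl

theorem H3 : (FacesL.all fun s =>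
    (!(FacesL.all fun t => !(decide (s ⊆ t)) || decide (s = t))) ||
    decide (s ∈ FacetL)) = true := by rfl

theorem facet_iff (s : Finset VV) : IsFacet myOp.augBergman s ↔ s ∈ FacetL := by
  rw [aug_eq]
  constructor
  · rintro ⟨hs, hmax⟩
    have hs' : s ∈ FacesL := hs
    have hb := allmem H3 hs'
    rcases (Bool.or_eq_true _ _).mp hb with h' | h'
    · exfalso
      have hall : (FacesL.all fun t => !(decide (s ⊆ t)) || decide (s = t)) = true :=
        List.all_eq_true.mpr (fun t ht => impB_rev (fun hst => hmax t ht hst))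
      rw [hall] at h'
      simp at h'
    · exact of_decide_eq_true h'
  · intro hs
    refine ⟨of_decide_eq_true (allmem H1 hs), ?_⟩
    intro t ht hst
    exact impB (allmem (allmem H2 hs) (show t ∈ FacesL from ht)) hst
/-! ### Step lemmas in Bool form -/

theorem hM1_of (L M : List (Finset VV)) (u : Finset VV)
    (h : (M.all fun t => (L.any fun s => decide (t ⊆ s)) && decide (t ⊆ u)) = true) :
    ∀ t ∈ M, (∃ s ∈ L, t ⊆ s) ∧ t ⊆ u := by
  intro t ht
  have h2 := allmem h ht
  rw [Bool.and_eq_true] at h2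
  obtain ⟨ha, hb⟩ := h2
  obtain ⟨s, hs, hts⟩ := List.any_eq_true.mp ha
  exact ⟨⟨s, hs, of_decide_eq_true hts⟩, of_decide_eq_true hb⟩

theorem hM2_of (v1 v2 v3 v4 v5 v6 : VV) (L M : List (Finset VV))
    (h : (allB fun b1 => allB fun b2 => allB fun b3 => allB fun b4 => allB fun b5 =>
      allB fun b6 =>
      (!(L.any fun s => decide (hexF v1 v2 v3 v4 v5 v6 b1 b2 b3 b4 b5 b6 ⊆ s))) ||
      decide (hexF v1 v2 v3 v4 v5 v6 b1 b2 b3 b4 b5 b6 ∈ M)) = true) :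
    ∀ b1 b2 b3 b4 b5 b6 : Bool,
      (∃ s ∈ L, hexF v1 v2 v3 v4 v5 v6 b1 b2 b3 b4 b5 b6 ⊆ s) →
      hexF v1 v2 v3 v4 v5 v6 b1 b2 b3 b4 b5 b6 ∈ M := by
  intro b1 b2 b3 b4 b5 b6 hex
  have h2 := allB_elim (allB_elim (allB_elim (allB_elim (allB_elim (allB_elim h b1) b2) b3) b4) b5) b6
  rcases (Bool.or_eq_true _ _).mp h2 with h' | h'
  · exfalso
    obtain ⟨s, hs, hts⟩ := hex
    have : (L.any fun s => decide (hexF v1 v2 v3 v4 v5 v6 b1 b2 b3 b4 b5 b6 ⊆ s)) = true :=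
      List.any_eq_true.mpr ⟨s, hs, decide_eq_true hts⟩
    rw [this] at h'
    simp at h'
  · exact of_decide_eq_true h'

theorem hcard_of (M : List (Finset VV)) (n : ℕ)
    (h : (M.all fun s => (!(M.all fun t => !(decide (s ⊆ t)) || decide (s = t))) ||
      decide (s.card = n)) = true) :
    ∀ s ∈ M, (∀ t ∈ M, s ⊆ t → s = t) → s.card = n := by
  intro s hs hmax
  have hb := allmem h hs
  rcases (Bool.or_eq_true _ _).mp hb with h' | h'
  · exfalso
    have hall : (M.all fun t => !(decide (s ⊆ t)) || decide (s = t)) = true :=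
      List.all_eq_true.mpr (fun t ht => impB_rev (fun hst => hmax t ht hst))
    rw [hall] at h'
    simp at h'
  · exact of_decide_eq_true h'

/-! ### The shelling of the augmented Bergman complex -/

theorem shell_aug : IsShelling myOp.augBergman FacetL := by
  refine ⟨by decide, fun s => (facet_iff s).symm, ?_⟩
  intro i hi hpos
  have hi13 : i < 13 := hi
  interval_cases i
  · refine pure_of_list (yy 3) (xx {3}) (xx {2,3}) (xx {1,2,3}) (xx {1,2,3}) (xx {1,2,3}) _ ?_
      (FacetL.take 1) M1 _ 3 ?_ ?_ ?_ ?_ ?_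
    · rfl
    · rfl
    · exact hM1_of _ _ _ (by rfl)
    · exact hM2_of _ _ _ _ _ _ _ _ (by rfl)
    · decide
    · exact hcard_of _ _ (by rfl)
  · refine pure_of_list (yy 2) (yy 3) (xx {2,3}) (xx {1,2,3}) (xx {1,2,3}) (xx {1,2,3}) _ ?_
      (FacetL.take 2) M2 _ 3 ?_ ?_ ?_ ?_ ?_
    · rfl
    · rfl
    · exact hM1_of _ _ _ (by rfl)
    · exact hM2_of _ _ _ _ _ _ _ _ (by rfl)
    · decide
    · exact hcard_of _ _ (by rfl)
  · refine pure_of_list (xx (∅ : Finset (Fin 4))) (xx {2}) (xx {2,3}) (xx {1,2,3}) (xx {1,2,3}) (xx {1,2,3}) _ ?_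
      (FacetL.take 3) M3 _ 3 ?_ ?_ ?_ ?_ ?_
    · rfl
    · rfl
    · exact hM1_of _ _ _ (by rfl)
    · exact hM2_of _ _ _ _ _ _ _ _ (by rfl)
    · decide
    · exact hcard_of _ _ (by rfl)
  · refine pure_of_list (yy 3) (xx {3}) (xx {2,3}) (xx {0,2,3}) (xx {0,2,3}) (xx {0,2,3}) _ ?_
      (FacetL.take 4) M4 _ 3 ?_ ?_ ?_ ?_ ?_
    · rfl
    · rfl
    · exact hM1_of _ _ _ (by rfl)
    · exact hM2_of _ _ _ _ _ _ _ _ (by rfl)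
    · decide
    · exact hcard_of _ _ (by rfl)
  · refine pure_of_list (yy 2) (yy 3) (xx {2,3}) (xx {0,2,3}) (xx {0,2,3}) (xx {0,2,3}) _ ?_
      (FacetL.take 5) M5 _ 3 ?_ ?_ ?_ ?_ ?_
    · rfl
    · rfl
    · exact hM1_of _ _ _ (by rfl)
    · exact hM2_of _ _ _ _ _ _ _ _ (by rfl)
    · decide
    · exact hcard_of _ _ (by rfl)
  · refine pure_of_list (xx (∅ : Finset (Fin 4))) (xx {3}) (xx {2,3}) (xx {0,2,3}) (xx {0,2,3}) (xx {0,2,3}) _ ?_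
      (FacetL.take 6) M6 _ 3 ?_ ?_ ?_ ?_ ?_
    · rfl
    · rfl
    · exact hM1_of _ _ _ (by rfl)
    · exact hM2_of _ _ _ _ _ _ _ _ (by rfl)
    · decide
    · exact hcard_of _ _ (by rfl)
  · refine pure_of_list (xx (∅ : Finset (Fin 4))) (xx {2}) (xx {2,3}) (xx {0,2,3}) (xx {0,2,3}) (xx {0,2,3}) _ ?_
      (FacetL.take 7) M7 _ 3 ?_ ?_ ?_ ?_ ?_
    · rfl
    · rfl
    · exact hM1_of _ _ _ (by rfl)
    · exact hM2_of _ _ _ _ _ _ _ _ (by rfl)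
    · decide
    · exact hcard_of _ _ (by rfl)
  · refine pure_of_list (yy 2) (xx {2}) (xx {2,3}) (xx {0,2,3}) (xx {0,2,3}) (xx {0,2,3}) _ ?_
      (FacetL.take 8) M8 _ 3 ?_ ?_ ?_ ?_ ?_
    · rfl
    · rfl
    · exact hM1_of _ _ _ (by rfl)
    · exact hM2_of _ _ _ _ _ _ _ _ (by rfl)
    · decide
    · exact hcard_of _ _ (by rfl)
  · refine pure_of_list (yy 2) (xx {2}) (xx {2,3}) (xx {1,2,3}) (xx {1,2,3}) (xx {1,2,3}) _ ?_
      (FacetL.take 9) M9 _ 3 ?_ ?_ ?_ ?_ ?_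
    · rfl
    · rfl
    · exact hM1_of _ _ _ (by rfl)
    · exact hM2_of _ _ _ _ _ _ _ _ (by rfl)
    · decide
    · exact hcard_of _ _ (by rfl)
  · refine pure_of_list (yy 0) (xx {0,2,3}) (xx {0,2,3}) (xx {0,2,3}) (xx {0,2,3}) (xx {0,2,3}) _ ?_
      (FacetL.take 10) M10 _ 1 ?_ ?_ ?_ ?_ ?_
    · rfl
    · rfl
    · exact hM1_of _ _ _ (by rfl)
    · exact hM2_of _ _ _ _ _ _ _ _ (by rfl)
    · decide
    · exact hcard_of _ _ (by rfl)
  · refine pure_of_list (yy 1) (xx {1,2,3}) (xx {1,2,3}) (xx {1,2,3}) (xx {1,2,3}) (xx {1,2,3}) _ ?_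
      (FacetL.take 11) M11 _ 1 ?_ ?_ ?_ ?_ ?_
    · rfl
    · rfl
    · exact hM1_of _ _ _ (by rfl)
    · exact hM2_of _ _ _ _ _ _ _ _ (by rfl)
    · decide
    · exact hcard_of _ _ (by rfl)
  · refine pure_of_list (yy 0) (yy 1) (yy 1) (yy 1) (yy 1) (yy 1) _ ?_
      (FacetL.take 12) M12 _ 1 ?_ ?_ ?_ ?_ ?_
    · rfl
    · rfl
    · exact hM1_of _ _ _ (by rfl)
    · exact hM2_of _ _ _ _ _ _ _ _ (by rfl)
    · decide
    · exact hcard_of _ _ (by rfl)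
/-! ### The independence complex is not shellable -/

theorem facet_indep_iff (s : Finset (Fin 4)) :
    IsFacet myOp.indepComplex s ↔ (s = {0,1} ∨ s = {2,3}) := by
  have key : ∀ s : Finset (Fin 4),
      ((∀ i ∈ s, myCl (s.erase i) ⊂ myCl s) ∧
        ∀ t : Finset (Fin 4), (∀ i ∈ t, myCl (t.erase i) ⊂ myCl t) → s ⊆ t → s = t) ↔
      (s = {0,1} ∨ s = {2,3}) := by decide
  exact key s

theorem list_pair {α : Type*} {a b : α} (hab : a ≠ b) (l : List α) (hnd : l.Nodup)
    (hmem : ∀ s, s ∈ l ↔ s = a ∨ s = b) : l = [a, b] ∨ l = [b, a] := by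
  cases l with
  | nil => simpa using (hmem a).2 (Or.inl rfl)
  | cons c l' =>
    cases l' with
    | nil =>
      have ha := (hmem a).2 (Or.inl rfl)
      have hb2 := (hmem b).2 (Or.inr rfl)
      simp only [List.mem_singleton] at ha hb2
      exact absurd (ha.trans hb2.symm) hab
    | cons d l'' =>
      simp only [List.nodup_cons, List.mem_cons] at hnd
      have hl'' : l'' = [] := by
        rw [List.eq_nil_iff_forall_not_mem]
        intro e he
        have hce : c ≠ e := fun h => hnd.1 (Or.inr (h ▸ he))
        have hde : d ≠ e := fun h => hnd.2.1 (h ▸ he)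
        have hcd : c ≠ d := fun h => hnd.1 (Or.inl h)
        have hc' := (hmem c).1 (by simp)
        have hd' := (hmem d).1 (by simp)
        have he' := (hmem e).1 (by simp [he])
        rcases hc' with rfl | rfl <;> rcases hd' with rfl | rfl <;>
          rcases he' with rfl | rfl <;> simp_all
      subst hl''
      have hcd : c ≠ d := fun h => hnd.1 (Or.inl h)
      have hc' := (hmem c).1 (by simp)
      have hd' := (hmem d).1 (by simp)
      rcases hc' with rfl | rfl <;> rcases hd' with rfl | rfl
      · exact absurd rfl hcd
      · exact Or.inl rfl
      · exact Or.inr rfl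
      · exact absurd rfl hcd

theorem notShellPair (a b : Finset (Fin 4))
    (hd : ∀ t : Finset (Fin 4), t ⊆ a → t ⊆ b → t = ∅) (hb : b.card = 2) :
    ¬ IsPureDim ({t | ∃ s ∈ [a], t ⊆ s} ∩ {t | t ⊆ b}) ((b.card : ℤ) - 2) := by
  rintro ⟨hne, hpure⟩
  have hfac : IsFacet ({t | ∃ s ∈ [a], t ⊆ s} ∩ {t | t ⊆ b}) ∅ := by
    constructor
    · exact ⟨⟨a, by simp, Finset.empty_subset a⟩, Finset.empty_subset b⟩
    · rintro t ⟨⟨s, hs, hts⟩, htb⟩ _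
      have hsa : s = a := by simpa using hs
      exact (hd t (hsa ▸ hts) htb).symm
  have h0 := hpure ∅ hfac
  rw [hb] at h0
  simp at h0

theorem not_shell_indep : ¬ Shellable myOp.indepComplex := by
  rintro ⟨l, hnd, hmem, hstep⟩
  have hmem' : ∀ s, s ∈ l ↔ (s = {0,1} ∨ s = {2,3}) :=
    fun s => (hmem s).trans (facet_indep_iff s)
  have hab : ({0,1} : Finset (Fin 4)) ≠ {2,3} := by decide
  rcases list_pair hab l hnd hmem' with rfl | rfl
  · have h := hstep 1 (by simp) one_pos
    exact notShellPair {0,1} {2,3} (by decide) (by decide) h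
  · have h := hstep 1 (by simp) one_pos
    exact notShellPair {2,3} {0,1} (by decide) (by decide) h
/-! ### No shelling with basis facets first -/

theorem C1 : (FacetL.all fun s =>
    (!(decide (∀ v ∈ s, ∃ a : Fin 4, v = Sum.inl a))) ||
    decide (s = ({yy 0, yy 1} : Finset VV))) = true := by rfl

theorem C2 : (FacetL.all fun s =>
    decide (s ∈ FacetL.take 10) || decide (s ∈ FacetL.drop 10)) = true := by rfl

theorem C3 : ((FacetL.drop 10).all fun s => (FacetL.take 10).all fun u =>
    decide ((s ∩ u).card ≤ 1)) = true := by rfl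

theorem C4 : ((FacetL.take 10).all fun u => decide (u.card = 4)) = true := by rfl

theorem no_basis_first :
    ¬ ∃ l : List (Finset VV), IsShelling myOp.augBergman l ∧
      PrefixProp l (fun s => ∀ v ∈ s, ∃ a : Fin 4, v = Sum.inl a) := by
  rintro ⟨l, ⟨hnd, hmem, hstep⟩, hpre⟩
  have hmem' : ∀ s, s ∈ l ↔ s ∈ FacetL := fun s => (hmem s).trans (facet_iff s)
  -- the unique all-`y` facet is first
  have hf13l : ({yy 0, yy 1} : Finset VV) ∈ l := (hmem' _).2 (by decide)
  obtain ⟨j, hj, hlj⟩ := List.mem_iff_getElem.mp hf13l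
  have hl0 : ∀ (h0 : 0 < l.length), l[0] = ({yy 0, yy 1} : Finset VV) := by
    intro h0
    by_cases hj0 : j = 0
    · subst hj0; exact hlj
    · have hPj : (∀ v ∈ l[j], ∃ a : Fin 4, v = Sum.inl a) := by
        rw [hlj]; decide
      have hP0 := hpre 0 j h0 hj (Nat.pos_of_ne_zero hj0) hPj
      have h0mem : l[0] ∈ FacetL := (hmem' _).1 (List.getElem_mem h0)
      exact impB (allmem C1 h0mem) hP0
  -- the first index carrying a top-dimensional facet
  have hbex : ∃ k, k < l.length ∧ l.getD k ∅ ∈ FacetL.take 10 := by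
    have hb0l : ({xx ∅, xx {3}, xx {2,3}, xx {1,2,3}} : Finset VV) ∈ l :=
      (hmem' _).2 (by decide)
    obtain ⟨k, hk, hlk⟩ := List.mem_iff_getElem.mp hb0l
    refine ⟨k, hk, ?_⟩
    rw [List.getD_eq_getElem l ∅ hk, hlk]
    decide
  obtain ⟨hmlen, hmbig⟩ := Nat.find_spec hbex
  set m := Nat.find hbex with hmdef
  have hmpos : 0 < m := by
    rcases Nat.eq_zero_or_pos m with h0 | h0
    · exfalso
      rw [h0] at hmbig hmlen
      rw [List.getD_eq_getElem l ∅ hmlen, hl0 hmlen] at hmbig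
      exact absurd hmbig (by decide)
    · exact h0
  have h := hstep m hmlen hmpos
  have hum : l[m] ∈ FacetL.take 10 := by
    rw [← List.getD_eq_getElem l ∅ hmlen]; exact hmbig
  have hcard4 : (l[m]).card = 4 := of_decide_eq_true (allmem C4 hum)
  -- a maximal face of the intersection complex
  have hXfin : ({t | ∃ s ∈ l.take m, t ⊆ s} ∩ {t | t ⊆ l[m]} : Set (Finset VV)).Finite := by
    apply Set.Finite.subset (l[m]).powerset.finite_toSet
    intro t ht
    simp only [Finset.coe_powerset, Set.mem_preimage, Set.mem_powerset_iff]
    exact Finset.coe_subset.mpr ht.2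
  have hXne : ({t | ∃ s ∈ l.take m, t ⊆ s} ∩ {t | t ⊆ l[m]} : Set (Finset VV)).Nonempty := by
    have h0t : 0 < (l.take m).length := by
      rw [List.length_take]; exact lt_min hmpos (lt_of_lt_of_le hmpos (Nat.le_of_lt hmlen))
    refine ⟨∅, ⟨(l.take m)[0], List.getElem_mem h0t, Finset.empty_subset _⟩,
      Finset.empty_subset _⟩
  obtain ⟨t0, ht0X, ht0max⟩ := Set.Finite.exists_maximalFor id _ hXfin hXne
  have hfac : IsFacet ({t | ∃ s ∈ l.take m, t ⊆ s} ∩ {t | t ⊆ l[m]} : Set (Finset VV)) t0 :=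
    ⟨ht0X, fun t ht hsub => Finset.Subset.antisymm hsub (ht0max ht hsub)⟩
  have hcard3 := h.2 t0 hfac
  rw [hcard4] at hcard3
  have ht03 : t0.card = 3 := by
    have hz : ((t0.card : ℤ)) = 3 := by rw [hcard3]; norm_num
    exact_mod_cast hz
  obtain ⟨⟨s, hsmem, hts⟩, htu⟩ := ht0X
  obtain ⟨k, hk, hlk⟩ := List.mem_iff_getElem.mp hsmem
  have hkm : k < m := lt_of_lt_of_le hk (by rw [List.length_take]; exact min_le_left _ _)
  have hkl : k < l.length := by
    rw [List.length_take] at hk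
    exact lt_of_lt_of_le hk (min_le_right _ _)
  have hlk' : l[k] = s := by rw [← hlk]; exact (List.getElem_take (xs := l) (j := m) (i := k) (h := hk)).symm
  have hknotbig : l[k] ∉ FacetL.take 10 := by
    intro hbig
    exact Nat.find_min hbex hkm ⟨hkl, by rw [List.getD_eq_getElem l ∅ hkl]; exact hbig⟩
  have hkfac : l[k] ∈ FacetL := (hmem' _).1 (List.getElem_mem hkl)
  have hksmall : l[k] ∈ FacetL.drop 10 := by
    have hc2 := allmem C2 hkfac
    rcases (Bool.or_eq_true _ _).mp hc2 with h' | h'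
    · exact absurd (of_decide_eq_true h') hknotbig
    · exact of_decide_eq_true h'
  have hsub2 : t0 ⊆ s ∩ l[m] := Finset.subset_inter hts htu
  have hle : t0.card ≤ (s ∩ l[m]).card := Finset.card_le_card hsub2
  have hb1 : (s ∩ l[m]).card ≤ 1 :=
    of_decide_eq_true (allmem (allmem C3 (hlk' ▸ hksmall)) hum)
  omega

end SB18

/-- There is a closure operator on a finite set whose augmented
Bergman complex is shellable, whose independence complex is not shellable, and whose
augmented Bergman complex admits no shelling order in which all facets corresponding
to bases (those all of whose vertices are of ground-set type `y_a = Sum.inl a`)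
appear first. -/
theorem exists_closureOp_no_basis_to_flag_shelling :
    ∃ (n : ℕ) (f : ClosureOp (Fin n)),
      Shellable f.augBergman ∧
      ¬ Shellable f.indepComplex ∧
      ¬ ∃ l : List (Finset (Fin n ⊕ Finset (Fin n))),
          IsShelling f.augBergman l ∧
          PrefixProp l (fun s => ∀ v ∈ s, ∃ a : Fin n, v = Sum.inl a) :=
  ⟨4, SB18.myOp, ⟨SB18.FacetL, SB18.shell_aug⟩, SB18.not_shell_indep, SB18.no_basis_first⟩
end
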